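/- arXiv:1810.10114 — 4 statements merged into one kernel-verified Lean document; each statement's English description precedes it below -/
import Mathlib

section
/- Fix integers n ≥ 2 and L ≥ 1 and a node u in {1,…,n}. In the homogeneous binary MAG M(n;L), the degree D_{n,L}(u) of node u has a compound binomial distribution: for all 0 ≤ d ≤ n−1 and 0 ≤ ℓ ≤ L, P(D_{n,L}(u) = d and S_L(u) = ℓ) = C(L,ℓ) μ(1)^ℓ μ(0)^{L−ℓ} · C(n−1,d) (Γ(1)^ℓ Γ(0)^{L−ℓ})^d (1 − Γ(1)^ℓ Γ(0)^{L−ℓ})^{n−1−d}; equivalently, S_L(u) is Binomial(L, μ(1)) and, conditionally on S_L(u) = ℓ, the rv D_{n,L}(u) is Binomial(n−1, Γ(1)^ℓ Γ(0)^{L−ℓ}). -/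
/-!
Encode the attribute vector of a node by the set of its attributes equal to one. Conditionally on
all attributes, the edges at `u` are independent, the edge to `v` being present with probability
`Q(K, J_v)` when `u` has attribute set `K` and `v` has attribute set `J_v`. So the probability
that `u` has attribute set `K`, the neighbours `v` have attribute sets `J_v`, and `u` is linked
exactly to the nodes of `T` is a product over the neighbours. Summing out the `J_v` factorises
neighbour by neighbour, each factor being `∑_J P(A(v) = J) Q(K, J) = Γ(1)^|K| Γ(0)^(L-|K|)` or its
complement; summing over the `T` with `|T| = d` and over the `K` with `|K| = ℓ` produces the two
binomial coefficients.
-/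

open MeasureTheory ProbabilityTheory Finset

section Measure

variable {Ω : Type*} [MeasurableSpace Ω] {P : Measure Ω}

lemma measureReal_eq_sum_inter_preimage [IsFiniteMeasure P] {β : Type*} [MeasurableSpace β]
    [MeasurableSingletonClass β] {X : Ω → β} (hX : Measurable X) {F : Finset β}
    (hF : ∀ ω, X ω ∈ F) (E : Set Ω) :
    P.real E = ∑ x ∈ F, P.real (E ∩ X ⁻¹' {x}) := by
  have hcover : X ⁻¹' F = Set.univ := Set.eq_univ_of_forall hF
  rw [← measureReal_restrict_apply_univ, ← hcover, measureReal_def,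
    ← sum_measure_preimage_singleton F fun x _ => hX (measurableSet_singleton x),
    ENNReal.toReal_sum fun _ _ => measure_ne_top _ _]
  refine sum_congr rfl fun x _ => ?_
  rw [← measureReal_def, measureReal_restrict_apply (hX (measurableSet_singleton x)),
    Set.inter_comm]

lemma Finset.measurable_filter {α : Type*} [Countable α] (s : Finset α) {p : α → Ω → Prop}
    [∀ a ω, Decidable (p a ω)] (hp : ∀ a, MeasurableSet {ω | p a ω}) :
    Measurable fun ω => {a ∈ s | p a ω} := by
  refine measurable_to_countable' fun T => ?_
  have : (fun ω => {a ∈ s | p a ω}) ⁻¹' {T} = {ω | ∀ a, a ∈ s ∧ p a ω ↔ a ∈ T} := by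
    ext ω; simp [Finset.ext_iff]
  rw [this]
  exact measurableSet_setOfPred.2 <| Measurable.forall fun a =>
    (measurable_const.and (measurableSet_setOfPred.1 (hp a))).iff measurable_const

lemma measurableSet_setOf_le_iff (t : ℝ) (p : Prop) : MeasurableSet {x : ℝ | x ≤ t ↔ p} := by
  by_cases hp : p
  · convert measurableSet_Iic (a := t) using 1
    ext; simp [hp]
  · convert (measurableSet_Iic (a := t)).compl using 1
    ext; simp [hp]

lemma measureReal_le_eq_of_map_eq_uniform [IsProbabilityMeasure P] {X : Ω → ℝ}
    (hX : Measurable X) (hlaw : P.map X = volume.restrict (Set.Ioo 0 1)) {t : ℝ}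
    (ht : t ∈ Set.Icc 0 1) :
    P.real {ω | X ω ≤ t} = t := by
  have : {ω | X ω ≤ t} = X ⁻¹' Set.Iic t := rfl
  rw [this, ← map_measureReal_apply hX measurableSet_Iic, hlaw,
    Measure.restrict_congr_set Ioo_ae_eq_Ioc, measureReal_restrict_apply measurableSet_Iic,
    Set.inter_comm, Set.Ioc_inter_Iic, inf_eq_right.2 ht.2, Real.volume_real_Ioc_of_le ht.1,
    sub_zero]

lemma measureReal_le_iff_eq_of_map_eq_uniform [IsProbabilityMeasure P] {X : Ω → ℝ}
    (hX : Measurable X) (hlaw : P.map X = volume.restrict (Set.Ioo 0 1)) {t : ℝ}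
    (ht : t ∈ Set.Icc 0 1) (p : Prop) [Decidable p] :
    P.real {ω | X ω ≤ t ↔ p} = if p then t else 1 - t := by
  by_cases hp : p
  · simpa [hp] using measureReal_le_eq_of_map_eq_uniform hX hlaw ht
  · have : {ω | X ω ≤ t ↔ p} = {ω | X ω ≤ t}ᶜ := by ext; simp [hp]
    rw [if_neg hp, this, probReal_compl_eq_one_sub (measurableSet_le hX measurable_const),
      measureReal_le_eq_of_map_eq_uniform hX hlaw ht]

end Measure

section Subsets

variable {ι : Type*} [DecidableEq ι] {s K : Finset ι}

lemma prod_ite_mem_of_subset {M : Type*} [CommMonoid M] (hK : K ⊆ s) (f g : ι → M) :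
    ∏ k ∈ s, (if k ∈ K then f k else g k) = (∏ k ∈ K, f k) * ∏ k ∈ s \ K, g k := by
  rw [prod_ite, filter_mem_eq_inter, inter_eq_right.2 hK, filter_notMem_eq_sdiff]

lemma prod_ite_mem_eq_pow {M : Type*} [CommMonoid M] (hK : K ⊆ s) (a b : M) :
    ∏ k ∈ s, (if k ∈ K then a else b) = a ^ #K * b ^ (#s - #K) := by
  rw [prod_ite_mem_of_subset hK, prod_const, prod_const, card_sdiff_of_subset hK]

lemma sum_powerset_prod_ite {R : Type*} [CommSemiring R] (s : Finset ι) (f g : ι → R) :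
    ∑ J ∈ s.powerset, ∏ k ∈ s, (if k ∈ J then f k else g k) = ∏ k ∈ s, (f k + g k) := by
  rw [prod_add]
  exact sum_congr rfl fun J hJ => prod_ite_mem_of_subset (mem_powerset.1 hJ) f g

end Subsets

namespace MAG

/-- An attribute vector in `{0,1}^s` is encoded by the set `K ⊆ s` of attributes equal to one. -/
def attrVec (K : Finset ℕ) (k : ℕ) : ℕ := if k ∈ K then 1 else 0

def edgeProb (q : ℕ → ℕ → ℝ) (s K J : Finset ℕ) : ℝ := ∏ k ∈ s, q (attrVec K k) (attrVec J k)

def attrSetProb (μ0 μ1 : ℝ) (s J : Finset ℕ) : ℝ := ∏ k ∈ s, if k ∈ J then μ1 else μ0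

/-- The probability that a node with attribute set `K` is linked to a given other node. -/
def linkProb (μ0 μ1 : ℝ) (q : ℕ → ℕ → ℝ) (s K : Finset ℕ) : ℝ :=
  ∏ k ∈ s, (μ0 * q (attrVec K k) 0 + μ1 * q (attrVec K k) 1)

section Combinatorics

variable {μ0 μ1 : ℝ} {q : ℕ → ℕ → ℝ} {s K : Finset ℕ}

lemma attrVec_le_one (K : Finset ℕ) (k : ℕ) : attrVec K k ≤ 1 := by
  unfold attrVec; split_ifs <;> simp

lemma edgeProb_mem_Icc (hq : ∀ a ≤ 1, ∀ b ≤ 1, q a b ∈ Set.Icc 0 1) (K J : Finset ℕ) :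
    edgeProb q s K J ∈ Set.Icc 0 1 := by
  have hqK k := hq _ (attrVec_le_one K k) _ (attrVec_le_one J k)
  exact ⟨prod_nonneg fun k _ => (hqK k).1, prod_le_one (fun k _ => (hqK k).1) fun k _ => (hqK k).2⟩

lemma sum_attrSetProb (hμ : μ0 + μ1 = 1) : ∑ J ∈ s.powerset, attrSetProb μ0 μ1 s J = 1 := by
  simp only [attrSetProb, sum_powerset_prod_ite, add_comm μ1, hμ, prod_const_one]

lemma sum_attrSetProb_mul_edgeProb (K : Finset ℕ) :
    ∑ J ∈ s.powerset, attrSetProb μ0 μ1 s J * edgeProb q s K J = linkProb μ0 μ1 q s K := by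
  simp_rw [linkProb, add_comm (μ0 * _), ← sum_powerset_prod_ite]
  refine sum_congr rfl fun J _ => ?_
  rw [attrSetProb, edgeProb, ← prod_mul_distrib]
  refine prod_congr rfl fun k _ => ?_
  by_cases hk : k ∈ J <;> simp [attrVec, hk]

lemma sum_attrSetProb_mul_one_sub_edgeProb (hμ : μ0 + μ1 = 1) (K : Finset ℕ) :
    ∑ J ∈ s.powerset, attrSetProb μ0 μ1 s J * (1 - edgeProb q s K J) =
      1 - linkProb μ0 μ1 q s K := by
  simp only [mul_sub, mul_one, sum_sub_distrib, sum_attrSetProb hμ, sum_attrSetProb_mul_edgeProb]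

lemma linkProb_eq_pow (hK : K ⊆ s) :
    linkProb μ0 μ1 q s K =
      (μ0 * q 1 0 + μ1 * q 1 1) ^ #K * (μ0 * q 0 0 + μ1 * q 0 1) ^ (#s - #K) := by
  simp_rw [linkProb, attrVec, apply_ite (fun a => μ0 * q a 0 + μ1 * q a 1)]
  exact prod_ite_mem_eq_pow hK _ _

end Combinatorics

section Model

variable {Ω : Type*}

def baseVariables (A : ℕ → ℕ → Ω → ℕ) (U : ℕ → ℕ → Ω → ℝ) :
    (ℕ × ℕ) ⊕ {p : ℕ × ℕ // p.1 < p.2} → Ω → ℝ :=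
  Sum.elim (fun p ω => A p.1 p.2 ω) (fun p => U p.1.1 p.1.2)

def attrSet (A : ℕ → ℕ → Ω → ℕ) (s : Finset ℕ) (w : ℕ) (ω : Ω) : Finset ℕ :=
  {k ∈ s | A k w ω = 1}

noncomputable def degree (q : ℕ → ℕ → ℝ) (A : ℕ → ℕ → Ω → ℕ) (U : ℕ → ℕ → Ω → ℝ)
    (s V : Finset ℕ) (u : ℕ) (ω : Ω) : ℕ :=
  ∑ v ∈ V, if U u v ω ≤ ∏ k ∈ s, q (A k u ω) (A k v ω) then 1 else 0

/-- The neighbours of `u` in `V` if `u` had attribute set `K`: on `{attrSet A s u = K}` this is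
the true neighbourhood (`degree_eq_card_linkSet`). -/
noncomputable def linkSet (q : ℕ → ℕ → ℝ) (A : ℕ → ℕ → Ω → ℕ) (U : ℕ → ℕ → Ω → ℝ)
    (s V : Finset ℕ) (u : ℕ) (K : Finset ℕ) (ω : Ω) : Finset ℕ :=
  {v ∈ V | U u v ω ≤ edgeProb q s K (attrSet A s v ω)}

variable {μ0 μ1 : ℝ} {q : ℕ → ℕ → ℝ} {A : ℕ → ℕ → Ω → ℕ} {U : ℕ → ℕ → Ω → ℝ}
  {s V K : Finset ℕ} {u : ℕ}

lemma apply_eq_attrVec_attrSet {w : ℕ} {ω : Ω} (hA : ∀ k, A k w ω ≤ 1) {k : ℕ} (hk : k ∈ s) :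
    A k w ω = attrVec (attrSet A s w ω) k := by
  rcases Nat.le_one_iff_eq_zero_or_eq_one.1 (hA k) with h | h <;> simp [attrVec, attrSet, hk, h]

lemma attrSet_eq_iff {w : ℕ} {ω : Ω} (hA : ∀ k, A k w ω ≤ 1) (hK : K ⊆ s) :
    attrSet A s w ω = K ↔ ∀ k ∈ s, A k w ω = attrVec K k := by
  refine ⟨fun h k hk => h ▸ apply_eq_attrVec_attrSet hA hk, fun h => ?_⟩
  ext k
  by_cases hk : k ∈ s
  · by_cases hkK : k ∈ K <;> simp [attrSet, attrVec, hk, hkK, h k hk]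
  · simpa [attrSet, hk] using fun h => hk (hK h)

lemma sum_eq_card_attrSet {w : ℕ} {ω : Ω} (hA : ∀ k, A k w ω ≤ 1) :
    ∑ k ∈ s, A k w ω = #(attrSet A s w ω) := by
  rw [attrSet, card_filter]
  exact sum_congr rfl fun k _ => by have := hA k; split_ifs <;> omega

lemma prod_eq_edgeProb {ω : Ω} (hA : ∀ k w, A k w ω ≤ 1) (u v : ℕ) :
    ∏ k ∈ s, q (A k u ω) (A k v ω) = edgeProb q s (attrSet A s u ω) (attrSet A s v ω) :=
  prod_congr rfl fun k hk => by
    rw [← apply_eq_attrVec_attrSet (hA · u) hk, ← apply_eq_attrVec_attrSet (hA · v) hk]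

lemma degree_eq_card_linkSet {ω : Ω} (hA : ∀ k w, A k w ω ≤ 1) (hK : attrSet A s u ω = K) :
    degree q A U s V u ω = #(linkSet q A U s V u K ω) := by
  simp only [degree, linkSet, card_filter, prod_eq_edgeProb hA, hK]

lemma linkSet_eq_iff {T : Finset ℕ} {ω : Ω} (hT : T ⊆ V) :
    linkSet q A U s V u K ω = T ↔
      ∀ v ∈ V, (U u v ω ≤ edgeProb q s K (attrSet A s v ω) ↔ v ∈ T) := by
  simp only [linkSet, Finset.ext_iff, mem_filter]
  exact ⟨fun h v hv => by simpa [hv] using h v,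
    fun h v => ⟨fun hv => (h v hv.1).1 hv.2, fun hv => ⟨hT hv, (h v (hT hv)).2 hv⟩⟩⟩

variable [MeasurableSpace Ω] {P : Measure Ω}

lemma measurable_attrSet {w : ℕ} (hA : ∀ k, Measurable (A k w)) : Measurable (attrSet A s w) :=
  Finset.measurable_filter s fun k => hA k (measurableSet_singleton 1)

/-- `none` stands for `u` itself and `some v` for the neighbour `v`. -/
lemma iIndepFun_star (hUsym : ∀ v w, U w v = U v w) (hindep : iIndepFun (baseVariables A U) P)
    (hu : u ∉ V) :
    iIndepFun (Sum.elim (fun p : s × Option V => fun ω => (A p.1 (p.2.elim u (↑)) ω : ℝ))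
      (fun v : V => U u v)) P := by
  have hne (v : V) : u ≠ v := fun h => hu (h ▸ v.2)
  let g : s × Option V → ℕ × ℕ := fun p => (p.1, p.2.elim u (↑))
  let e : V → {p : ℕ × ℕ // p.1 < p.2} := fun v => ⟨(min u v, max u v), min_lt_max.2 (hne v)⟩
  have hg : Function.Injective g := by
    rintro ⟨k, o⟩ ⟨k', o'⟩ h
    simp only [g, Prod.mk.injEq] at h
    refine Prod.ext (Subtype.ext h.1) ?_
    rcases o with _ | v <;> rcases o' with _ | v'
    · rfl
    · exact absurd h.2 (hne v')
    · exact absurd h.2.symm (hne v)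
    · exact congrArg some (Subtype.ext h.2)
  have he : Function.Injective e := by
    intro v v' h
    simp only [e, Subtype.mk.injEq, Prod.mk.injEq] at h
    have := min_add_max u (v : ℕ)
    have := min_add_max u (v' : ℕ)
    exact Subtype.ext (by omega)
  convert hindep.precomp (Sum.map_injective.2 ⟨hg, he⟩) using 1
  funext i ω
  rcases i with p | v
  · rfl
  · rcases le_total u v with h | h
    · simp [baseVariables, e, h]
    · simp [baseVariables, e, h, hUsym]

lemma measureReal_star_cell (hUsym : ∀ v w, U w v = U v w)
    (hindep : iIndepFun (baseVariables A U) P) (hu : u ∉ V) (a : ℕ → ℕ) (b : V → ℕ → ℕ)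
    {B : V → Set ℝ} (hB : ∀ v, MeasurableSet (B v)) :
    P.real ((⋂ k ∈ s, {ω | A k u ω = a k}) ∩
        ⋂ v : V, ((⋂ k ∈ s, {ω | A k v ω = b v k}) ∩ U u v ⁻¹' B v)) =
      (∏ k ∈ s, P.real {ω | A k u ω = a k}) *
        ∏ v : V, ((∏ k ∈ s, P.real {ω | A k v ω = b v k}) * P.real (U u v ⁻¹' B v)) := by
  have := hindep.isProbabilityMeasure
  let c : s × Option V → ℕ := fun p => p.2.elim (a p.1) (fun v => b v p.1)
  have key := (iIndepFun_star (s := s) hUsym hindep hu).measure_inter_preimage_eq_mul univ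
    (sets := Sum.elim (fun p => {(c p : ℝ)}) B)
    (by rintro (p | v) -; exacts [measurableSet_singleton _, hB v])
  have hpre (k w n : ℕ) : (fun ω => (A k w ω : ℝ)) ⁻¹' {(n : ℝ)} = {ω | A k w ω = n} := by
    ext; simp
  simp only [mem_univ, Set.iInter_true, Set.iInter_sum, Fintype.prod_sum_type, Sum.elim_inl,
    Sum.elim_inr, hpre] at key
  have hset : (⋂ k ∈ s, {ω | A k u ω = a k}) ∩
        ⋂ v : V, ((⋂ k ∈ s, {ω | A k v ω = b v k}) ∩ U u v ⁻¹' B v) =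
      (⋂ p : s × Option V, {ω | A p.1 (p.2.elim u (↑)) ω = c p}) ∩ ⋂ v : V, U u v ⁻¹' B v := by
    ext ω
    simp only [Set.mem_inter_iff, Set.mem_iInter, Set.mem_ofPred_eq, Prod.forall, Option.forall,
      Option.elim_none, Option.elim_some, Subtype.forall, c, Set.mem_preimage]
    grind
  rw [measureReal_def, hset, key, ENNReal.toReal_mul, ENNReal.toReal_prod, ENNReal.toReal_prod,
    Fintype.prod_prod_type]
  simp only [Fintype.prod_option, Option.elim_none, Option.elim_some, prod_mul_distrib,
    ← measureReal_def, c]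
  rw [mul_assoc, Finset.prod_comm, prod_coe_sort s fun k => P.real {ω | A k u ω = a k}]
  congr 2
  exact prod_congr rfl fun v _ => prod_coe_sort s fun k => P.real {ω | A k v ω = b v k}

structure IsBinaryMAG (P : Measure Ω) (μ1 : ℝ) (A : ℕ → ℕ → Ω → ℕ) (U : ℕ → ℕ → Ω → ℝ) :
    Prop where
  measurable_attr : ∀ k w, Measurable (A k w)
  measurable_unif : ∀ v w, Measurable (U v w)
  attr_le_one : ∀ k w ω, A k w ω ≤ 1
  measure_attr_eq_one : ∀ k w, P {ω | A k w ω = 1} = ENNReal.ofReal μ1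
  map_unif : ∀ v w, v < w → P.map (U v w) = volume.restrict (Set.Ioo 0 1)
  unif_symm : ∀ v w, U w v = U v w
  iIndepFun : iIndepFun (baseVariables A U) P

namespace IsBinaryMAG

lemma measurable_linkSet (hM : IsBinaryMAG P μ1 A U) : Measurable (linkSet q A U s V u K) :=
  Finset.measurable_filter V fun v => measurableSet_le (hM.measurable_unif u v)
    ((Measurable.of_discrete (f := edgeProb q s K)).comp
      (measurable_attrSet (hM.measurable_attr · v)))

lemma map_unif_of_ne (hM : IsBinaryMAG P μ1 A U) {v w : ℕ} (h : v ≠ w) :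
    P.map (U v w) = volume.restrict (Set.Ioo 0 1) := by
  rcases h.lt_or_gt with h | h
  · exact hM.map_unif v w h
  · rw [hM.unif_symm]; exact hM.map_unif w v h

lemma measureReal_attr_eq (hM : IsBinaryMAG P μ1 A U) (hμ : μ0 + μ1 = 1) (hμ1 : 0 ≤ μ1)
    (k w : ℕ) (K : Finset ℕ) :
    P.real {ω | A k w ω = attrVec K k} = if k ∈ K then μ1 else μ0 := by
  have := hM.iIndepFun.isProbabilityMeasure
  have h1 : P.real {ω | A k w ω = 1} = μ1 := by
    rw [measureReal_def, hM.measure_attr_eq_one, ENNReal.toReal_ofReal hμ1]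
  by_cases hk : k ∈ K
  · simp [attrVec, hk, h1]
  · have : {ω | A k w ω = 0} = {ω | A k w ω = 1}ᶜ := Set.ext fun ω => by
      have := hM.attr_le_one k w ω
      simp only [Set.mem_ofPred_eq, Set.mem_compl_iff]
      omega
    have hm : MeasurableSet {ω | A k w ω = 1} := hM.measurable_attr k w (measurableSet_singleton 1)
    simp only [attrVec, hk, if_false, this]
    rw [probReal_compl_eq_one_sub hm, h1]
    linarith

lemma measureReal_attrSet_inter_linkSet_inter_attrSets (hM : IsBinaryMAG P μ1 A U)
    (hμ : μ0 + μ1 = 1) (hμ1 : 0 ≤ μ1) (hq : ∀ a ≤ 1, ∀ b ≤ 1, q a b ∈ Set.Icc 0 1)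
    (hu : u ∉ V) (hK : K ⊆ s) {T : Finset ℕ} (hT : T ⊆ V) {J : V → Finset ℕ}
    (hJ : ∀ v, J v ⊆ s) :
    P.real ({ω | attrSet A s u ω = K} ∩ {ω | linkSet q A U s V u K ω = T} ∩
        (fun ω (v : V) => attrSet A s v ω) ⁻¹' {J}) =
      attrSetProb μ0 μ1 s K * ∏ v : V, (attrSetProb μ0 μ1 s (J v) *
        if (v : ℕ) ∈ T then edgeProb q s K (J v) else 1 - edgeProb q s K (J v)) := by
  have := hM.iIndepFun.isProbabilityMeasure
  have hset : {ω | attrSet A s u ω = K} ∩ {ω | linkSet q A U s V u K ω = T} ∩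
      (fun ω (v : V) => attrSet A s v ω) ⁻¹' {J} =
        (⋂ k ∈ s, {ω | A k u ω = attrVec K k}) ∩ ⋂ v : V, ((⋂ k ∈ s,
          {ω | A k v ω = attrVec (J v) k}) ∩
            U u v ⁻¹' {x | x ≤ edgeProb q s K (J v) ↔ (v : ℕ) ∈ T}) := by
    ext ω
    have hv (v : V) : (∀ k ∈ s, A k v ω = attrVec (J v) k) ↔ attrSet A s v ω = J v :=
      (attrSet_eq_iff (hM.attr_le_one · v ω) (hJ v)).symm
    simp only [Set.mem_inter_iff, Set.mem_ofPred_eq, Set.mem_preimage, Set.mem_singleton_iff,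
      funext_iff, Set.mem_iInter, hv, ← attrSet_eq_iff (hM.attr_le_one · u ω) hK, linkSet_eq_iff hT]
    constructor
    · rintro ⟨⟨hu', hl⟩, hJ'⟩
      exact ⟨hu', fun v => ⟨hJ' v, hJ' v ▸ hl v v.2⟩⟩
    · rintro ⟨hu', h⟩
      exact ⟨⟨hu', fun v hv => (h ⟨v, hv⟩).1 ▸ (h ⟨v, hv⟩).2⟩, fun v => (h v).1⟩
  rw [hset, measureReal_star_cell hM.unif_symm hM.iIndepFun hu _ _
    fun v => measurableSet_setOf_le_iff _ _]
  simp only [hM.measureReal_attr_eq hμ hμ1, attrSetProb]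
  congr 1
  refine prod_congr rfl fun v _ => congrArg _ ?_
  exact measureReal_le_iff_eq_of_map_eq_uniform (hM.measurable_unif u v)
    (hM.map_unif_of_ne fun h => hu (h ▸ v.2)) (edgeProb_mem_Icc hq _ _) _

lemma measureReal_attrSet_inter_linkSet (hM : IsBinaryMAG P μ1 A U)
    (hμ : μ0 + μ1 = 1) (hμ1 : 0 ≤ μ1) (hq : ∀ a ≤ 1, ∀ b ≤ 1, q a b ∈ Set.Icc 0 1)
    (hu : u ∉ V) (hK : K ⊆ s) {T : Finset ℕ} (hT : T ⊆ V) :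
    P.real ({ω | attrSet A s u ω = K} ∩ {ω | linkSet q A U s V u K ω = T}) =
      attrSetProb μ0 μ1 s K * linkProb μ0 μ1 q s K ^ #T *
        (1 - linkProb μ0 μ1 q s K) ^ (#V - #T) := by
  have := hM.iIndepFun.isProbabilityMeasure
  have hsum (v : ℕ) : ∑ J ∈ s.powerset, attrSetProb μ0 μ1 s J *
      (if v ∈ T then edgeProb q s K J else 1 - edgeProb q s K J) =
        if v ∈ T then linkProb μ0 μ1 q s K else 1 - linkProb μ0 μ1 q s K := by
    split_ifs
    exacts [sum_attrSetProb_mul_edgeProb K, sum_attrSetProb_mul_one_sub_edgeProb hμ K]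
  rw [measureReal_eq_sum_inter_preimage (X := fun ω (v : V) => attrSet A s v ω)
      (F := Fintype.piFinset fun _ => s.powerset)
      (measurable_pi_lambda _ fun v => measurable_attrSet (hM.measurable_attr · v))
      fun ω => Fintype.mem_piFinset.2 fun v => mem_powerset.2 (filter_subset _ _),
    sum_congr rfl fun J hJ => hM.measureReal_attrSet_inter_linkSet_inter_attrSets hμ hμ1 hq hu hK
      hT fun v => mem_powerset.1 (Fintype.mem_piFinset.1 hJ v),
    ← mul_sum, ← prod_univ_sum (fun _ => s.powerset) fun (v : V) J =>
      attrSetProb μ0 μ1 s J * if (v : ℕ) ∈ T then edgeProb q s K J else 1 - edgeProb q s K J]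
  simp only [hsum]
  rw [prod_coe_sort V fun v => if v ∈ T then _ else _, prod_ite_mem_eq_pow hT, mul_assoc]

lemma measureReal_attrSet_inter_card_linkSet (hM : IsBinaryMAG P μ1 A U)
    (hμ : μ0 + μ1 = 1) (hμ1 : 0 ≤ μ1) (hq : ∀ a ≤ 1, ∀ b ≤ 1, q a b ∈ Set.Icc 0 1)
    (hu : u ∉ V) (hK : K ⊆ s) (d : ℕ) :
    P.real ({ω | attrSet A s u ω = K} ∩ {ω | #(linkSet q A U s V u K ω) = d}) =
      (#V).choose d * (attrSetProb μ0 μ1 s K * linkProb μ0 μ1 q s K ^ d *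
        (1 - linkProb μ0 μ1 q s K) ^ (#V - d)) := by
  have := hM.iIndepFun.isProbabilityMeasure
  rw [measureReal_eq_sum_inter_preimage hM.measurable_linkSet (F := V.powerset)
    fun ω => mem_powerset.2 (filter_subset _ _)]
  have hterm : ∀ T ∈ V.powerset,
      P.real ({ω | attrSet A s u ω = K} ∩ {ω | #(linkSet q A U s V u K ω) = d} ∩
        linkSet q A U s V u K ⁻¹' {T}) =
      if #T = d then attrSetProb μ0 μ1 s K * linkProb μ0 μ1 q s K ^ d *
        (1 - linkProb μ0 μ1 q s K) ^ (#V - d) else 0 := by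
    intro T hT
    split_ifs with hTd
    · rw [← hTd, ← hM.measureReal_attrSet_inter_linkSet hμ hμ1 hq hu hK (mem_powerset.1 hT)]
      congr 1
      ext ω
      simp only [Set.mem_inter_iff, Set.mem_ofPred_eq, Set.mem_preimage, Set.mem_singleton_iff]
      exact ⟨fun h => ⟨h.1.1, h.2⟩, fun h => ⟨⟨h.1, h.2 ▸ rfl⟩, h.2⟩⟩
    · convert measureReal_empty (μ := P)
      exact Set.eq_empty_of_forall_notMem fun ω h => hTd (h.2 ▸ h.1.2)
  rw [sum_congr rfl hterm, ← sum_filter, ← powersetCard_eq_filter, sum_const, card_powersetCard,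
    nsmul_eq_mul]

lemma measureReal_degree_eq_and_sum_attr_eq (hM : IsBinaryMAG P μ1 A U)
    (hμ : μ0 + μ1 = 1) (hμ1 : 0 ≤ μ1) (hq : ∀ a ≤ 1, ∀ b ≤ 1, q a b ∈ Set.Icc 0 1)
    (hu : u ∉ V) (d ℓ : ℕ) :
    P.real {ω | degree q A U s V u ω = d ∧ ∑ k ∈ s, A k u ω = ℓ} =
      (#s).choose ℓ * ((#V).choose d * (μ1 ^ ℓ * μ0 ^ (#s - ℓ) *
        ((μ0 * q 1 0 + μ1 * q 1 1) ^ ℓ * (μ0 * q 0 0 + μ1 * q 0 1) ^ (#s - ℓ)) ^ d *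
        (1 - (μ0 * q 1 0 + μ1 * q 1 1) ^ ℓ * (μ0 * q 0 0 + μ1 * q 0 1) ^ (#s - ℓ)) ^
          (#V - d))) := by
  have := hM.iIndepFun.isProbabilityMeasure
  have hterm : ∀ K ∈ s.powerset,
      P.real ({ω | degree q A U s V u ω = d ∧ ∑ k ∈ s, A k u ω = ℓ} ∩ attrSet A s u ⁻¹' {K}) =
        if #K = ℓ then
          P.real ({ω | attrSet A s u ω = K} ∩ {ω | #(linkSet q A U s V u K ω) = d}) else 0 := by
    intro K _
    have hmem (ω : Ω) (hω : attrSet A s u ω = K) :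
        degree q A U s V u ω = #(linkSet q A U s V u K ω) ∧ ∑ k ∈ s, A k u ω = #K :=
      ⟨degree_eq_card_linkSet (hM.attr_le_one · · ω) hω,
        hω ▸ sum_eq_card_attrSet (hM.attr_le_one · u ω)⟩
    split_ifs with hKℓ
    · congr 1
      ext ω
      simp only [Set.mem_inter_iff, Set.mem_ofPred_eq, Set.mem_preimage, Set.mem_singleton_iff]
      exact ⟨fun h => ⟨h.2, (hmem ω h.2).1 ▸ h.1.1⟩,
        fun h => ⟨⟨(hmem ω h.1).1 ▸ h.2, (hmem ω h.1).2.trans hKℓ⟩, h.1⟩⟩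
    · convert measureReal_empty (μ := P)
      exact Set.eq_empty_of_forall_notMem fun ω h => hKℓ ((hmem ω h.2).2 ▸ h.1.2)
  rw [measureReal_eq_sum_inter_preimage (measurable_attrSet (hM.measurable_attr · u))
      (F := s.powerset) fun ω => mem_powerset.2 (filter_subset _ _),
    sum_congr rfl hterm, ← sum_filter, ← powersetCard_eq_filter]
  rw [sum_congr rfl fun K hK => by
    obtain ⟨hKs, hKℓ⟩ := mem_powersetCard.1 hK
    rw [hM.measureReal_attrSet_inter_card_linkSet hμ hμ1 hq hu hKs d, attrSetProb,
      prod_ite_mem_eq_pow hKs, linkProb_eq_pow hKs, hKℓ],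
    sum_const, card_powersetCard, nsmul_eq_mul]

end IsBinaryMAG

end Model

end MAG

theorem stmt0_general {Ω : Type*} [MeasurableSpace Ω] (P : Measure Ω) [IsProbabilityMeasure P]
    (μ0 μ1 : ℝ) (hμ1 : μ1 ∈ Set.Ioo (0:ℝ) 1)
    (hμ : μ0 + μ1 = 1)
    (q : ℕ → ℕ → ℝ)
    (hq : ∀ a ≤ 1, ∀ b ≤ 1, q a b ∈ Set.Ioo (0:ℝ) 1)
    (A : ℕ → ℕ → Ω → ℕ) (U : ℕ → ℕ → Ω → ℝ)
    (hAmeas : ∀ ℓ u, Measurable (A ℓ u))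
    (hUmeas : ∀ u v, Measurable (U u v))
    (hA01 : ∀ ℓ u ω, A ℓ u ω ≤ 1)
    (hA1 : ∀ ℓ u, P {ω | A ℓ u ω = 1} = ENNReal.ofReal μ1)
    (hU : ∀ u v : ℕ, u < v →
      P.map (U u v) = (volume.restrict (Set.Ioo (0:ℝ) 1)))
    (hUsym : ∀ u v, U v u = U u v)
    (hindep : iIndepFun (m := fun _ => (inferInstance : MeasurableSpace ℝ))
      (Sum.elim (fun p : ℕ × ℕ => fun ω => ((A p.1 p.2 ω : ℕ) : ℝ))
        (fun p : {p : ℕ × ℕ // p.1 < p.2} => U p.1.1 p.1.2)) P)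
    (n L : ℕ) (u : ℕ) (hu : u ∈ Finset.Icc 1 n) :
    ∀ d ≤ n - 1, ∀ ℓ ≤ L,
      P {ω | (∑ v ∈ (Finset.Icc 1 n).erase u,
            (if U u v ω ≤ ∏ k ∈ Finset.Icc 1 L, q (A k u ω) (A k v ω) then 1 else 0)) = d ∧
          (∑ k ∈ Finset.Icc 1 L, A k u ω) = ℓ} =
        ENNReal.ofReal ((L.choose ℓ : ℝ) * μ1 ^ ℓ * μ0 ^ (L - ℓ) *
          ((n - 1).choose d : ℝ) *
          ((μ0 * q 1 0 + μ1 * q 1 1) ^ ℓ * (μ0 * q 0 0 + μ1 * q 0 1) ^ (L - ℓ)) ^ d *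
          (1 - (μ0 * q 1 0 + μ1 * q 1 1) ^ ℓ *
            (μ0 * q 0 0 + μ1 * q 0 1) ^ (L - ℓ)) ^ (n - 1 - d)) := by
  intro d _ ℓ _
  have hM : MAG.IsBinaryMAG P μ1 A U := ⟨hAmeas, hUmeas, hA01, hA1, hU, hUsym, hindep⟩
  have hq' : ∀ a ≤ 1, ∀ b ≤ 1, q a b ∈ Set.Icc 0 1 :=
    fun a ha b hb => Set.Ioo_subset_Icc_self (hq a ha b hb)
  have key := hM.measureReal_degree_eq_and_sum_attr_eq (s := Icc 1 L) hμ hμ1.1.le hq'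
    (notMem_erase u (Icc 1 n)) d ℓ
  simp only [MAG.degree, card_erase_of_mem hu, Nat.card_Icc, Nat.add_sub_cancel] at key
  rw [← ofReal_measureReal, key]
  congr 1
  ring

/-- in the homogeneous binary MAG `M(n;L)`, the degree `D_{n,L}(u)`
of a node `u` has a compound binomial distribution: jointly with the number
`S_L(u)` of attributes of `u` equal to one,
`P(D = d, S = ℓ) = C(L,ℓ) μ1^ℓ μ0^{L-ℓ} · C(n-1,d) (Γ1^ℓ Γ0^{L-ℓ})^d (1 - Γ1^ℓ Γ0^{L-ℓ})^{n-1-d}`;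
i.e. `S_L(u)` is `Bin(L, μ1)` and, given `S_L(u) = ℓ`, `D_{n,L}(u)` is
`Bin(n-1, Γ1^ℓ Γ0^{L-ℓ})`.  Nodes are `{1,…,n}`, attributes are labeled `1,…,L`,
`A ℓ u` is the `ℓ`-th (binary, `{0,1}`-valued) attribute of node `u`,
`U u v` are the uniform variables, the two families being mutually independent,
and the edge indicator between `u` and `v` is `1{U(u,v) ≤ ∏_{ℓ=1}^L q(A_ℓ(u), A_ℓ(v))}`. -/
theorem stmt0 {Ω : Type*} [MeasurableSpace Ω] (P : Measure Ω) [IsProbabilityMeasure P]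
    (μ0 μ1 : ℝ) (hμ0 : μ0 ∈ Set.Ioo (0:ℝ) 1) (hμ1 : μ1 ∈ Set.Ioo (0:ℝ) 1)
    (hμ : μ0 + μ1 = 1)
    (q : ℕ → ℕ → ℝ)
    (hq : ∀ a ≤ 1, ∀ b ≤ 1, q a b ∈ Set.Ioo (0:ℝ) 1)
    (hqsym : q 0 1 = q 1 0)
    (A : ℕ → ℕ → Ω → ℕ) (U : ℕ → ℕ → Ω → ℝ)
    (hAmeas : ∀ ℓ u, Measurable (A ℓ u))
    (hUmeas : ∀ u v, Measurable (U u v))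
    (hA01 : ∀ ℓ u ω, A ℓ u ω ≤ 1)
    (hA1 : ∀ ℓ u, P {ω | A ℓ u ω = 1} = ENNReal.ofReal μ1)
    (hU : ∀ u v : ℕ, u < v →
      P.map (U u v) = (volume.restrict (Set.Ioo (0:ℝ) 1)))
    (hUsym : ∀ u v, U v u = U u v)
    (hUdiag : ∀ u ω, U u u ω = 1)
    (hindep : iIndepFun (m := fun _ => (inferInstance : MeasurableSpace ℝ))
      (Sum.elim (fun p : ℕ × ℕ => fun ω => ((A p.1 p.2 ω : ℕ) : ℝ))
        (fun p : {p : ℕ × ℕ // p.1 < p.2} => U p.1.1 p.1.2)) P)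
    (n L : ℕ) (hn : 2 ≤ n) (hL : 1 ≤ L) (u : ℕ) (hu : u ∈ Finset.Icc 1 n) :
    ∀ d ≤ n - 1, ∀ ℓ ≤ L,
      P {ω | (∑ v ∈ (Finset.Icc 1 n).erase u,
            (if U u v ω ≤ ∏ k ∈ Finset.Icc 1 L, q (A k u ω) (A k v ω) then 1 else 0)) = d ∧
          (∑ k ∈ Finset.Icc 1 L, A k u ω) = ℓ} =
        ENNReal.ofReal ((L.choose ℓ : ℝ) * μ1 ^ ℓ * μ0 ^ (L - ℓ) *
          ((n - 1).choose d : ℝ) *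
          ((μ0 * q 1 0 + μ1 * q 1 1) ^ ℓ * (μ0 * q 0 0 + μ1 * q 0 1) ^ (L - ℓ)) ^ d *
          (1 - (μ0 * q 1 0 + μ1 * q 1 1) ^ ℓ *
            (μ0 * q 0 0 + μ1 * q 0 1) ^ (L - ℓ)) ^ (n - 1 - d)) :=
  stmt0_general P μ0 μ1 hμ1 hμ q hq A U hAmeas hUmeas hA01 hA1 hU hUsym hindep n L u hu
end

section
/- Let ρ > 0 and let n ↦ L_n be a ρ-admissible scaling. For each n ≥ 2 let (D_n, S_n) be a compound-binomial degree pair with parameters (n, L_n). Then the zero-one law holds: lim_{n→∞} P(D_n = 0) = 1 if 1 + ρ·ln(Γ(1)^{μ(1)} Γ(0)^{μ(0)}) < 0, and lim_{n→∞} P(D_n = 0) = 0 if 1 + ρ·ln(Γ(1)^{μ(1)} Γ(0)^{μ(0)}) > 0. -/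
open MeasureTheory ProbabilityTheory Filter Real
open scoped ENNReal NNReal

noncomputable section

/-- A compound-binomial degree pair `(D, S)` with parameters `(n, L)`:
`S` is Binomial(L, μ1) and, conditionally on `S = ℓ`, `D` is
Binomial(n-1, Γ1^ℓ Γ0^(L-ℓ)); equivalently the joint pmf is as below. -/
def IsCompoundBinomialPair {Ω : Type*} [MeasurableSpace Ω] (P : Measure Ω)
    (μ1 μ0 Γ1 Γ0 : ℝ) (n L : ℕ) (D S : Ω → ℕ) : Prop :=
  Measurable D ∧ Measurable S ∧
    ∀ d ≤ n - 1, ∀ ℓ ≤ L,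
      P {ω | D ω = d ∧ S ω = ℓ} =
        ENNReal.ofReal ((L.choose ℓ : ℝ) * μ1 ^ ℓ * μ0 ^ (L - ℓ) *
          ((n - 1).choose d : ℝ) * (Γ1 ^ ℓ * Γ0 ^ (L - ℓ)) ^ d *
          (1 - Γ1 ^ ℓ * Γ0 ^ (L - ℓ)) ^ (n - 1 - d))

/-- A scaling `n ↦ L n` is `ρ`-admissible if `L n ~ ρ ln n` as `n → ∞`. -/
def IsAdmissible (ρ : ℝ) (L : ℕ → ℕ) : Prop :=
  (∀ n, 0 < L n) ∧
    Tendsto (fun n => (L n : ℝ) / (ρ * Real.log n)) atTop (nhds 1)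

/-- `Ψ(x) = (x+1) ln(x+1) - x`. -/
def Psi (x : ℝ) : ℝ := (x + 1) * Real.log (x + 1) - x

/-- The standard Gaussian distribution function. -/
def Phi (z : ℝ) : ℝ := ∫ t in Set.Iic z, Real.exp (-t ^ 2 / 2) / Real.sqrt (2 * Real.pi)

/-!
Conditioning on `S = ℓ` gives `P(D = 0) = ∑ ℓ, w ℓ * (1 - q ℓ) ^ (n - 1)`, with binomial weights
`w ℓ = C(L, ℓ) μ1^ℓ μ0^(L-ℓ)` and `q ℓ = Γ1^ℓ Γ0^(L-ℓ)`. By Chebyshev's inequality (the variance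
of the Bernstein polynomials) the weights concentrate on `|ℓ - L μ1| < ε L`, where
`q ℓ = exp (L (log g ± ε |log Γ1 - log Γ0|))` with `g = Γ1^μ1 Γ0^μ0`. As `L ~ ρ ln n`, `n q ℓ` is
then about `n ^ (1 + ρ log g ± O(ε))`, which tends to `0` or `∞` according to the sign of
`1 + ρ log g`. Bernoulli's inequality `1 - (1 - q) ^ (n - 1) ≤ n q` and
`(1 - q) ^ (n - 1) ≤ exp (-(n - 1) q)` turn this into the two limits.
-/

open Finset

def binomialWeight (p : ℝ) (K ℓ : ℕ) : ℝ := K.choose ℓ * p ^ ℓ * (1 - p) ^ (K - ℓ)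

section BinomialWeight

variable {p : ℝ} {K : ℕ}

lemma binomialWeight_nonneg (hp : p ∈ Set.Icc (0 : ℝ) 1) (ℓ : ℕ) : 0 ≤ binomialWeight p K ℓ := by
  have := sub_nonneg.2 hp.2
  have := hp.1
  unfold binomialWeight
  positivity

lemma binomialWeight_eq_bernsteinPolynomial (ℓ : ℕ) :
    binomialWeight p K ℓ = (bernsteinPolynomial ℝ K ℓ).eval p := by
  simp [binomialWeight, bernsteinPolynomial]

variable (p K)

lemma sum_binomialWeight : ∑ ℓ ∈ range (K + 1), binomialWeight p K ℓ = 1 := by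
  simpa [binomialWeight_eq_bernsteinPolynomial, Polynomial.eval_finsetSum] using
    congr_arg (Polynomial.eval p) (bernsteinPolynomial.sum ℝ K)

lemma sum_sq_mul_binomialWeight :
    ∑ ℓ ∈ range (K + 1), (K * p - ℓ) ^ 2 * binomialWeight p K ℓ = K * p * (1 - p) := by
  simpa [binomialWeight_eq_bernsteinPolynomial, Polynomial.eval_finsetSum, mul_assoc] using
    congr_arg (Polynomial.eval p) (bernsteinPolynomial.variance ℝ K)

end BinomialWeight

def atypicalMass (p ε : ℝ) (K : ℕ) : ℝ :=
  ∑ ℓ ∈ range (K + 1) with ε * K ≤ |((ℓ : ℕ) : ℝ) - K * p|, binomialWeight p K ℓ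

section AtypicalMass

variable {p ε : ℝ}

lemma atypicalMass_nonneg (hp : p ∈ Set.Icc (0 : ℝ) 1) (K : ℕ) : 0 ≤ atypicalMass p ε K :=
  sum_nonneg fun ℓ _ => binomialWeight_nonneg hp ℓ

lemma atypicalMass_le (hp : p ∈ Set.Icc (0 : ℝ) 1) (hε : 0 < ε) {K : ℕ} (hK : 0 < K) :
    atypicalMass p ε K ≤ p * (1 - p) / ε ^ 2 / K := by
  have hK' : (0 : ℝ) < K := Nat.cast_pos.2 hK
  rw [div_div, le_div_iff₀ (by positivity)]
  refine le_of_mul_le_mul_right ?_ hK'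
  calc atypicalMass p ε K * (ε ^ 2 * K) * K
      = ∑ ℓ ∈ range (K + 1) with ε * K ≤ |((ℓ : ℕ) : ℝ) - K * p|,
          (ε * K) ^ 2 * binomialWeight p K ℓ := by
        rw [atypicalMass, ← mul_sum]; ring
    _ ≤ ∑ ℓ ∈ range (K + 1) with ε * K ≤ |((ℓ : ℕ) : ℝ) - K * p|,
          (K * p - ℓ) ^ 2 * binomialWeight p K ℓ := by
        refine sum_le_sum fun ℓ hℓ => mul_le_mul_of_nonneg_right ?_ (binomialWeight_nonneg hp ℓ)
        rw [← sq_abs (_ - _), abs_sub_comm]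
        exact pow_le_pow_left₀ (by positivity) (mem_filter.1 hℓ).2 2
    _ ≤ ∑ ℓ ∈ range (K + 1), (K * p - ℓ) ^ 2 * binomialWeight p K ℓ :=
        sum_le_sum_of_subset_of_nonneg (filter_subset _ _) fun ℓ _ _ =>
          mul_nonneg (sq_nonneg _) (binomialWeight_nonneg hp ℓ)
    _ = p * (1 - p) * K := by rw [sum_sq_mul_binomialWeight]; ring

lemma tendsto_atypicalMass (hp : p ∈ Set.Icc (0 : ℝ) 1) (hε : 0 < ε) :
    Tendsto (atypicalMass p ε) atTop (nhds 0) :=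
  tendsto_of_tendsto_of_tendsto_of_le_of_le' tendsto_const_nhds
    (tendsto_const_div_atTop_nhds_zero_nat (p * (1 - p) / ε ^ 2))
    (Eventually.of_forall fun K => atypicalMass_nonneg hp K)
    ((eventually_gt_atTop 0).mono fun _ hK => atypicalMass_le hp hε hK)

end AtypicalMass

lemma sum_mul_le_sum_filter_add {ι : Type*} {s : Finset ι} (P : ι → Prop) [DecidablePred P]
    {w f : ι → ℝ} {c : ℝ} (hw : ∀ i ∈ s, 0 ≤ w i) (hw₁ : ∑ i ∈ s, w i ≤ 1)
    (hf : ∀ i ∈ s, f i ≤ 1) (hfc : ∀ i ∈ s, ¬P i → f i ≤ c) (hc : 0 ≤ c) :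
    ∑ i ∈ s, w i * f i ≤ ∑ i ∈ s with P i, w i + c := by
  rw [← sum_filter_add_sum_filter_not s P]
  refine add_le_add ?_ ?_
  · refine sum_le_sum fun i hi => ?_
    have hi := (mem_filter.1 hi).1
    exact mul_le_of_le_one_right (hw i hi) (hf i hi)
  · calc ∑ i ∈ s with ¬P i, w i * f i ≤ ∑ i ∈ s with ¬P i, w i * c := by
          refine sum_le_sum fun i hi => ?_
          obtain ⟨hi, hPi⟩ := mem_filter.1 hi
          exact mul_le_mul_of_nonneg_left (hfc i hi hPi) (hw i hi)
      _ = (∑ i ∈ s with ¬P i, w i) * c := by rw [sum_mul]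
      _ ≤ 1 * c := by
          refine mul_le_mul_of_nonneg_right ?_ hc
          exact (sum_le_sum_of_subset_of_nonneg (filter_subset _ _) fun i hi _ => hw i hi).trans hw₁
      _ = c := one_mul c

lemma one_sub_one_sub_pow_le {q : ℝ} (hq : q ≤ 2) (m : ℕ) : 1 - (1 - q) ^ m ≤ m * q := by
  have := one_add_mul_le_pow (a := -q) (by linarith) m
  rw [← sub_eq_add_neg] at this
  linarith

def edgeProb (Γ1 Γ0 : ℝ) (K ℓ : ℕ) : ℝ := Γ1 ^ ℓ * Γ0 ^ (K - ℓ)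

def logGeomMean (p Γ1 Γ0 : ℝ) : ℝ := p * log Γ1 + (1 - p) * log Γ0

section EdgeProb

variable {Γ1 Γ0 : ℝ}

lemma edgeProb_pos (hΓ1 : 0 < Γ1) (hΓ0 : 0 < Γ0) (K ℓ : ℕ) : 0 < edgeProb Γ1 Γ0 K ℓ := by
  unfold edgeProb; positivity

lemma edgeProb_nonneg (hΓ1 : 0 ≤ Γ1) (hΓ0 : 0 ≤ Γ0) (K ℓ : ℕ) : 0 ≤ edgeProb Γ1 Γ0 K ℓ := by
  unfold edgeProb; positivity

lemma edgeProb_le_one (hΓ1 : Γ1 ∈ Set.Icc (0 : ℝ) 1) (hΓ0 : Γ0 ∈ Set.Icc (0 : ℝ) 1) (K ℓ : ℕ) :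
    edgeProb Γ1 Γ0 K ℓ ≤ 1 :=
  mul_le_one₀ (pow_le_one₀ hΓ1.1 hΓ1.2) (pow_nonneg hΓ0.1 _) (pow_le_one₀ hΓ0.1 hΓ0.2)

lemma one_sub_edgeProb_nonneg (hΓ1 : Γ1 ∈ Set.Icc (0 : ℝ) 1) (hΓ0 : Γ0 ∈ Set.Icc (0 : ℝ) 1)
    (K ℓ : ℕ) : 0 ≤ 1 - edgeProb Γ1 Γ0 K ℓ :=
  sub_nonneg.2 <| edgeProb_le_one hΓ1 hΓ0 K ℓ

lemma edgeProb_eq_exp (hΓ1 : 0 < Γ1) (hΓ0 : 0 < Γ0) (p : ℝ) {K ℓ : ℕ} (hℓ : ℓ ≤ K) :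
    edgeProb Γ1 Γ0 K ℓ =
      exp (logGeomMean p Γ1 Γ0 * K + (ℓ - K * p) * (log Γ1 - log Γ0)) := by
  have h : edgeProb Γ1 Γ0 K ℓ = exp (ℓ * log Γ1 + (K - ℓ : ℕ) * log Γ0) := by
    rw [exp_add, exp_nat_mul, exp_nat_mul, exp_log hΓ1, exp_log hΓ0, edgeProb]
  rw [h, Nat.cast_sub hℓ, logGeomMean]
  ring_nf

lemma abs_log_edgeProb_sub_le (hΓ1 : 0 < Γ1) (hΓ0 : 0 < Γ0) {p ε : ℝ} {K ℓ : ℕ} (hℓ : ℓ ≤ K)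
    (htyp : |(ℓ : ℝ) - K * p| ≤ ε * K) :
    |log (edgeProb Γ1 Γ0 K ℓ) - logGeomMean p Γ1 Γ0 * K| ≤ ε * |log Γ1 - log Γ0| * K := by
  rw [edgeProb_eq_exp hΓ1 hΓ0 p hℓ, log_exp, add_sub_cancel_left, abs_mul]
  calc |(ℓ : ℝ) - K * p| * |log Γ1 - log Γ0| ≤ ε * K * |log Γ1 - log Γ0| :=
        mul_le_mul_of_nonneg_right htyp (abs_nonneg _)
    _ = ε * |log Γ1 - log Γ0| * K := by ring

end EdgeProb

def zeroDegreeProb (p Γ1 Γ0 : ℝ) (n K : ℕ) : ℝ :=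
  ∑ ℓ ∈ range (K + 1), binomialWeight p K ℓ * (1 - edgeProb Γ1 Γ0 K ℓ) ^ (n - 1)

section ZeroDegreeProb

variable {p Γ1 Γ0 : ℝ}

lemma zeroDegreeProb_nonneg (hp : p ∈ Set.Icc (0 : ℝ) 1) (hΓ1 : Γ1 ∈ Set.Icc (0 : ℝ) 1)
    (hΓ0 : Γ0 ∈ Set.Icc (0 : ℝ) 1) (n K : ℕ) : 0 ≤ zeroDegreeProb p Γ1 Γ0 n K :=
  sum_nonneg fun ℓ _ =>
    mul_nonneg (binomialWeight_nonneg hp ℓ) (pow_nonneg (one_sub_edgeProb_nonneg hΓ1 hΓ0 K ℓ) _)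

lemma zeroDegreeProb_le_one (hp : p ∈ Set.Icc (0 : ℝ) 1) (hΓ1 : Γ1 ∈ Set.Icc (0 : ℝ) 1)
    (hΓ0 : Γ0 ∈ Set.Icc (0 : ℝ) 1) (n K : ℕ) : zeroDegreeProb p Γ1 Γ0 n K ≤ 1 :=
  calc zeroDegreeProb p Γ1 Γ0 n K ≤ ∑ ℓ ∈ range (K + 1), binomialWeight p K ℓ :=
        sum_le_sum fun ℓ _ => mul_le_of_le_one_right (binomialWeight_nonneg hp ℓ) <|
          pow_le_one₀ (one_sub_edgeProb_nonneg hΓ1 hΓ0 K ℓ)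
            (sub_le_self _ (edgeProb_nonneg hΓ1.1 hΓ0.1 K ℓ))
    _ = 1 := sum_binomialWeight p K

lemma one_sub_zeroDegreeProb_le (hp : p ∈ Set.Icc (0 : ℝ) 1) (hΓ1 : Γ1 ∈ Set.Ioc (0 : ℝ) 1)
    (hΓ0 : Γ0 ∈ Set.Ioc (0 : ℝ) 1) (ε : ℝ) (n K : ℕ) :
    1 - zeroDegreeProb p Γ1 Γ0 n K ≤ atypicalMass p ε K +
      n * exp ((logGeomMean p Γ1 Γ0 + ε * |log Γ1 - log Γ0|) * K) := by
  have hsum : 1 - zeroDegreeProb p Γ1 Γ0 n K = ∑ ℓ ∈ range (K + 1),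
      binomialWeight p K ℓ * (1 - (1 - edgeProb Γ1 Γ0 K ℓ) ^ (n - 1)) := by
    simp only [zeroDegreeProb, mul_sub, mul_one, sum_sub_distrib, sum_binomialWeight]
  rw [hsum]
  have hΓ1' := Set.Ioc_subset_Icc_self hΓ1
  have hΓ0' := Set.Ioc_subset_Icc_self hΓ0
  refine sum_mul_le_sum_filter_add _ (fun ℓ _ => binomialWeight_nonneg hp ℓ)
    (sum_binomialWeight p K).le
    (fun ℓ _ => sub_le_self _ (pow_nonneg (one_sub_edgeProb_nonneg hΓ1' hΓ0' K ℓ) _))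
    (fun ℓ hℓ htyp => ?_) (by positivity)
  have hℓK : ℓ ≤ K := mem_range_succ_iff.1 hℓ
  have hlog := abs_le.1 (abs_log_edgeProb_sub_le hΓ1.1 hΓ0.1 hℓK (not_le.1 htyp).le)
  have hq : edgeProb Γ1 Γ0 K ℓ ≤ exp ((logGeomMean p Γ1 Γ0 + ε * |log Γ1 - log Γ0|) * K) := by
    rw [← exp_log (edgeProb_pos hΓ1.1 hΓ0.1 K ℓ)]
    exact exp_le_exp.2 (by linarith [hlog.2])
  have hq0 := (edgeProb_pos hΓ1.1 hΓ0.1 K ℓ).le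
  calc 1 - (1 - edgeProb Γ1 Γ0 K ℓ) ^ (n - 1) ≤ (n - 1 : ℕ) * edgeProb Γ1 Γ0 K ℓ :=
        one_sub_one_sub_pow_le (by linarith [one_sub_edgeProb_nonneg hΓ1' hΓ0' K ℓ]) _
    _ ≤ n * edgeProb Γ1 Γ0 K ℓ := by gcongr; exact Nat.sub_le n 1
    _ ≤ _ := by gcongr

lemma zeroDegreeProb_le (hp : p ∈ Set.Icc (0 : ℝ) 1) (hΓ1 : Γ1 ∈ Set.Ioc (0 : ℝ) 1)
    (hΓ0 : Γ0 ∈ Set.Ioc (0 : ℝ) 1) (ε : ℝ) (n K : ℕ) :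
    zeroDegreeProb p Γ1 Γ0 n K ≤ atypicalMass p ε K +
      exp (-((n - 1 : ℕ) * exp ((logGeomMean p Γ1 Γ0 - ε * |log Γ1 - log Γ0|) * K))) := by
  have hΓ1' := Set.Ioc_subset_Icc_self hΓ1
  have hΓ0' := Set.Ioc_subset_Icc_self hΓ0
  refine sum_mul_le_sum_filter_add _ (fun ℓ _ => binomialWeight_nonneg hp ℓ)
    (sum_binomialWeight p K).le (fun ℓ _ => ?_) (fun ℓ hℓ htyp => ?_) (exp_pos _).le
  · exact pow_le_one₀ (one_sub_edgeProb_nonneg hΓ1' hΓ0' K ℓ)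
      (sub_le_self _ (edgeProb_nonneg hΓ1'.1 hΓ0'.1 K ℓ))
  have hℓK : ℓ ≤ K := mem_range_succ_iff.1 hℓ
  have hlog := abs_le.1 (abs_log_edgeProb_sub_le hΓ1.1 hΓ0.1 hℓK (not_le.1 htyp).le)
  have hq : exp ((logGeomMean p Γ1 Γ0 - ε * |log Γ1 - log Γ0|) * K) ≤ edgeProb Γ1 Γ0 K ℓ := by
    rw [← exp_log (edgeProb_pos hΓ1.1 hΓ0.1 K ℓ)]
    exact exp_le_exp.2 (by linarith [hlog.1])
  calc (1 - edgeProb Γ1 Γ0 K ℓ) ^ (n - 1) ≤ exp (-edgeProb Γ1 Γ0 K ℓ) ^ (n - 1) :=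
        pow_le_pow_left₀ (one_sub_edgeProb_nonneg hΓ1' hΓ0' K ℓ) (one_sub_le_exp_neg _) _
    _ = exp (-((n - 1 : ℕ) * edgeProb Γ1 Γ0 K ℓ)) := by rw [← exp_nat_mul, mul_neg]
    _ ≤ _ := exp_le_exp.2 (neg_le_neg (mul_le_mul_of_nonneg_left hq (Nat.cast_nonneg _)))

end ZeroDegreeProb

lemma measure_preimage_eq_sum_filter {α β : Type*} [MeasurableSpace α] [MeasurableSpace β]
    [MeasurableSingletonClass β] {P : Measure α} [IsProbabilityMeasure P] {X : α → β}
    (hX : Measurable X) {s : Finset β} (hs : ∑ b ∈ s, P (X ⁻¹' {b}) = 1) (t : Set β)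
    [DecidablePred (· ∈ t)] :
    P (X ⁻¹' t) = ∑ b ∈ s with b ∈ t, P (X ⁻¹' {b}) := by
  have hfiber : ∀ b, MeasurableSet (X ⁻¹' {b}) := fun b => hX (measurableSet_singleton b)
  rw [sum_measure_preimage_singleton _ fun b _ => hfiber b] at hs ⊢
  have hnull : P (X ⁻¹' s)ᶜ = 0 := (prob_compl_eq_zero_iff (hX s.measurableSet)).2 hs
  rw [← measure_inter_conull hnull, coe_filter]
  congr 1
  ext ω
  simp [and_comm]

lemma IsCompoundBinomialPair.measure_eq_mul {Ω : Type*} [MeasurableSpace Ω] {P : Measure Ω}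
    {p Γ1 Γ0 : ℝ} {n K : ℕ} {D S : Ω → ℕ} (h : IsCompoundBinomialPair P p (1 - p) Γ1 Γ0 n K D S)
    {d ℓ : ℕ} (hd : d ≤ n - 1) (hℓ : ℓ ≤ K) :
    P {ω | D ω = d ∧ S ω = ℓ} = ENNReal.ofReal
      (binomialWeight p K ℓ * binomialWeight (edgeProb Γ1 Γ0 K ℓ) (n - 1) d) := by
  rw [h.2.2 d hd ℓ hℓ, binomialWeight, binomialWeight, edgeProb]
  ring_nf

lemma IsCompoundBinomialPair.measure_zeroDegree_eq {Ω : Type*} [MeasurableSpace Ω] {P : Measure Ω}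
    [IsProbabilityMeasure P] {p Γ1 Γ0 : ℝ} {n K : ℕ} {D S : Ω → ℕ}
    (hp : p ∈ Set.Icc (0 : ℝ) 1) (hΓ1 : Γ1 ∈ Set.Icc (0 : ℝ) 1) (hΓ0 : Γ0 ∈ Set.Icc (0 : ℝ) 1)
    (h : IsCompoundBinomialPair P p (1 - p) Γ1 Γ0 n K D S) :
    P {ω | D ω = 0} = ENNReal.ofReal (zeroDegreeProb p Γ1 Γ0 n K) := by
  set X : Ω → ℕ × ℕ := fun ω => (D ω, S ω)
  have hfiber : ∀ x ∈ range (n - 1 + 1) ×ˢ range (K + 1), P (X ⁻¹' {x}) = ENNReal.ofReal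
      (binomialWeight p K x.2 * binomialWeight (edgeProb Γ1 Γ0 K x.2) (n - 1) x.1) := by
    rintro ⟨d, ℓ⟩ hx
    obtain ⟨hd, hℓ⟩ := mem_product.1 hx
    rw [← h.measure_eq_mul (mem_range_succ_iff.1 hd) (mem_range_succ_iff.1 hℓ)]
    congr 1
    ext
    simp [X]
  have hnonneg : ∀ x : ℕ × ℕ,
      0 ≤ binomialWeight p K x.2 * binomialWeight (edgeProb Γ1 Γ0 K x.2) (n - 1) x.1 :=
    fun x => mul_nonneg (binomialWeight_nonneg hp _)
      (binomialWeight_nonneg ⟨edgeProb_nonneg hΓ1.1 hΓ0.1 K _, edgeProb_le_one hΓ1 hΓ0 K _⟩ _)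
  have htotal : ∑ x ∈ range (n - 1 + 1) ×ˢ range (K + 1), P (X ⁻¹' {x}) = 1 := by
    rw [sum_congr rfl hfiber, ← ENNReal.ofReal_sum_of_nonneg fun x _ => hnonneg x,
      sum_product_right]
    simp only [← mul_sum, sum_binomialWeight, mul_one, ENNReal.ofReal_one]
  have hslice : {x ∈ range (n - 1 + 1) ×ˢ range (K + 1) | x ∈ {x : ℕ × ℕ | x.1 = 0}} =
      {0} ×ˢ range (K + 1) := by
    ext ⟨d, ℓ⟩
    simp only [mem_filter, mem_product, mem_range, mem_singleton, Set.mem_ofPred_eq]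
    omega
  calc P {ω | D ω = 0} = P (X ⁻¹' {x | x.1 = 0}) := rfl
    _ = ∑ x ∈ {0} ×ˢ range (K + 1), P (X ⁻¹' {x}) := by
        rw [measure_preimage_eq_sum_filter (h.1.prodMk h.2.1) htotal, hslice]
    _ = ∑ x ∈ {0} ×ˢ range (K + 1), ENNReal.ofReal
          (binomialWeight p K x.2 * binomialWeight (edgeProb Γ1 Γ0 K x.2) (n - 1) x.1) :=
        sum_congr rfl fun x hx => hfiber x (product_subset_product (by simp) subset_rfl hx)
    _ = ENNReal.ofReal (zeroDegreeProb p Γ1 Γ0 n K) := by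
        rw [← ENNReal.ofReal_sum_of_nonneg fun x _ => hnonneg x, sum_product, sum_singleton]
        simp [zeroDegreeProb, binomialWeight]

namespace IsAdmissible

variable {ρ : ℝ} {L : ℕ → ℕ}

lemma tendsto_atTop (hρ : 0 < ρ) (hL : IsAdmissible ρ L) : Tendsto L atTop atTop := by
  have hlog : Tendsto (fun n : ℕ => ρ * log n) atTop atTop :=
    (tendsto_log_atTop.comp tendsto_natCast_atTop_atTop).const_mul_atTop hρ
  refine tendsto_natCast_atTop_iff.1 <| (hL.2.pos_mul_atTop one_pos hlog).congr' ?_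
  filter_upwards [eventually_gt_atTop 1] with n hn
  have : 0 < log n := log_pos (by exact_mod_cast hn)
  field_simp

lemma log_add_mul_eventuallyEq (hρ : ρ ≠ 0) (γ : ℝ) :
    (fun n : ℕ => log n * (1 + ρ * γ * (L n / (ρ * log n)))) =ᶠ[atTop]
      fun n => log n + γ * L n := by
  filter_upwards [eventually_gt_atTop 1] with n hn
  have : 0 < log n := log_pos (by exact_mod_cast hn)
  field_simp

lemma tendsto_one_add_mul (hL : IsAdmissible ρ L) (c : ℝ) :
    Tendsto (fun n : ℕ => 1 + c * (L n / (ρ * log n))) atTop (nhds (1 + c)) := by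
  simpa using (hL.2.const_mul c).const_add 1

lemma tendsto_log_add_mul_atBot (hρ : ρ ≠ 0) (hL : IsAdmissible ρ L) {γ : ℝ}
    (hγ : 1 + ρ * γ < 0) : Tendsto (fun n : ℕ => log n + γ * L n) atTop atBot :=
  ((tendsto_log_atTop.comp tendsto_natCast_atTop_atTop).atTop_mul_neg hγ
    (hL.tendsto_one_add_mul (ρ * γ))).congr' (log_add_mul_eventuallyEq hρ γ)

lemma tendsto_log_add_mul_atTop (hρ : ρ ≠ 0) (hL : IsAdmissible ρ L) {γ : ℝ}
    (hγ : 0 < 1 + ρ * γ) : Tendsto (fun n : ℕ => log n + γ * L n) atTop atTop :=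
  ((tendsto_log_atTop.comp tendsto_natCast_atTop_atTop).atTop_mul_pos hγ
    (hL.tendsto_one_add_mul (ρ * γ))).congr' (log_add_mul_eventuallyEq hρ γ)

end IsAdmissible

section ZeroOneLaw

variable {p Γ1 Γ0 ρ : ℝ} {L : ℕ → ℕ}

theorem tendsto_zeroDegreeProb_one (hp : p ∈ Set.Icc (0 : ℝ) 1)
    (hΓ1 : Γ1 ∈ Set.Ioc (0 : ℝ) 1) (hΓ0 : Γ0 ∈ Set.Ioc (0 : ℝ) 1) (hρ : 0 < ρ)
    (hL : IsAdmissible ρ L) (h : 1 + ρ * logGeomMean p Γ1 Γ0 < 0) :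
    Tendsto (fun n => zeroDegreeProb p Γ1 Γ0 n (L n)) atTop (nhds 1) := by
  set g := logGeomMean p Γ1 Γ0
  set A := |log Γ1 - log Γ0|
  obtain ⟨ε, hε, hεA⟩ := exists_pos_mul_lt (neg_pos.2 h) (ρ * A)
  have hγ : 1 + ρ * (g + ε * A) < 0 := by linarith
  have htail := (tendsto_atypicalMass hp hε).comp (hL.tendsto_atTop hρ)
  have hmain : Tendsto (fun n : ℕ => n * exp ((g + ε * A) * L n)) atTop (nhds 0) := by
    refine (tendsto_exp_atBot.comp (hL.tendsto_log_add_mul_atBot hρ.ne' hγ)).congr' ?_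
    filter_upwards [eventually_gt_atTop 0] with n hn
    rw [Function.comp_apply, exp_add, exp_log (Nat.cast_pos.2 hn)]
  refine tendsto_of_tendsto_of_tendsto_of_le_of_le (by simpa using (htail.add hmain).const_sub 1)
    tendsto_const_nhds (fun n => ?_) fun n =>
      zeroDegreeProb_le_one hp (Set.Ioc_subset_Icc_self hΓ1) (Set.Ioc_subset_Icc_self hΓ0) n (L n)
  have := one_sub_zeroDegreeProb_le hp hΓ1 hΓ0 ε n (L n)
  linarith

theorem tendsto_zeroDegreeProb_zero (hp : p ∈ Set.Icc (0 : ℝ) 1)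
    (hΓ1 : Γ1 ∈ Set.Ioc (0 : ℝ) 1) (hΓ0 : Γ0 ∈ Set.Ioc (0 : ℝ) 1) (hρ : 0 < ρ)
    (hL : IsAdmissible ρ L) (h : 0 < 1 + ρ * logGeomMean p Γ1 Γ0) :
    Tendsto (fun n => zeroDegreeProb p Γ1 Γ0 n (L n)) atTop (nhds 0) := by
  set g := logGeomMean p Γ1 Γ0
  set A := |log Γ1 - log Γ0|
  obtain ⟨ε, hε, hεA⟩ := exists_pos_mul_lt h (ρ * A)
  have hγ : 0 < 1 + ρ * (g - ε * A) := by linarith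
  have htail := (tendsto_atypicalMass hp hε).comp (hL.tendsto_atTop hρ)
  have hexp : Tendsto (fun n : ℕ => exp (log n + (g - ε * A) * L n) / 2) atTop atTop :=
    (tendsto_exp_atTop.comp (hL.tendsto_log_add_mul_atTop hρ.ne' hγ)).atTop_div_const two_pos
  -- `n - 1 ≥ n / 2` for `n ≥ 2`
  have hmain : Tendsto (fun n : ℕ => ((n - 1 : ℕ) : ℝ) * exp ((g - ε * A) * L n)) atTop atTop := by
    refine tendsto_atTop_mono' atTop ?_ hexp
    filter_upwards [eventually_ge_atTop 2] with n hn
    have hn' : (2 : ℝ) ≤ n := by exact_mod_cast hn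
    rw [exp_add, exp_log (by linarith), Nat.cast_sub (by omega)]
    have := exp_pos ((g - ε * A) * L n)
    push_cast
    nlinarith
  refine tendsto_of_tendsto_of_tendsto_of_le_of_le tendsto_const_nhds
    (by simpa using htail.add (tendsto_exp_atBot.comp (tendsto_neg_atTop_atBot.comp hmain)))
    (fun n => zeroDegreeProb_nonneg hp (Set.Ioc_subset_Icc_self hΓ1)
      (Set.Ioc_subset_Icc_self hΓ0) n (L n)) fun n => ?_
  simpa using zeroDegreeProb_le hp hΓ1 hΓ0 ε n (L n)

end ZeroOneLaw

theorem stmt3_general {Ω : Type*} [MeasurableSpace Ω] (P : Measure Ω) [IsProbabilityMeasure P]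
    (μ0 μ1 Γ0 Γ1 : ℝ) (hμ1 : μ1 ∈ Set.Ioo (0:ℝ) 1)
    (hμ : μ0 + μ1 = 1) (hΓ0 : Γ0 ∈ Set.Ioo (0:ℝ) 1) (hΓ1 : Γ1 ∈ Set.Ioo (0:ℝ) 1)
    (ρ : ℝ) (hρ : 0 < ρ) (L : ℕ → ℕ) (hL : IsAdmissible ρ L)
    (D S : ℕ → Ω → ℕ)
    (hDS : ∀ n, 2 ≤ n → IsCompoundBinomialPair P μ1 μ0 Γ1 Γ0 n (L n) (D n) (S n)) :
    (1 + ρ * Real.log (Γ1 ^ μ1 * Γ0 ^ μ0) < 0 →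
      Tendsto (fun n => P {ω | D n ω = 0}) atTop (nhds (1 : ℝ≥0∞))) ∧
    (0 < 1 + ρ * Real.log (Γ1 ^ μ1 * Γ0 ^ μ0) →
      Tendsto (fun n => P {ω | D n ω = 0}) atTop (nhds (0 : ℝ≥0∞))) := by
  obtain rfl : μ0 = 1 - μ1 := by linarith
  have hμ1' := Set.Ioo_subset_Icc_self hμ1
  have hlog : log (Γ1 ^ μ1 * Γ0 ^ (1 - μ1)) = logGeomMean μ1 Γ1 Γ0 := by
    rw [log_mul (rpow_pos_of_pos hΓ1.1 _).ne' (rpow_pos_of_pos hΓ0.1 _).ne', log_rpow hΓ1.1,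
      log_rpow hΓ0.1, logGeomMean]
  have hP : ∀ᶠ n in atTop,
      ENNReal.ofReal (zeroDegreeProb μ1 Γ1 Γ0 n (L n)) = P {ω | D n ω = 0} :=
    (eventually_ge_atTop 2).mono fun n hn => ((hDS n hn).measure_zeroDegree_eq hμ1'
      (Set.Ioo_subset_Icc_self hΓ1) (Set.Ioo_subset_Icc_self hΓ0)).symm
  rw [hlog]
  refine ⟨fun h => ?_, fun h => ?_⟩
  · simpa using (ENNReal.tendsto_ofReal (tendsto_zeroDegreeProb_one hμ1'
      (Set.Ioo_subset_Ioc_self hΓ1) (Set.Ioo_subset_Ioc_self hΓ0) hρ hL h)).congr' hP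
  · simpa using (ENNReal.tendsto_ofReal (tendsto_zeroDegreeProb_zero hμ1'
      (Set.Ioo_subset_Ioc_self hΓ1) (Set.Ioo_subset_Ioc_self hΓ0) hρ hL h)).congr' hP

/-- zero-one law for `P(D_n = 0)` under a `ρ`-admissible scaling. -/
theorem stmt3 {Ω : Type*} [MeasurableSpace Ω] (P : Measure Ω) [IsProbabilityMeasure P]
    (μ0 μ1 Γ0 Γ1 : ℝ) (hμ0 : μ0 ∈ Set.Ioo (0:ℝ) 1) (hμ1 : μ1 ∈ Set.Ioo (0:ℝ) 1)
    (hμ : μ0 + μ1 = 1) (hΓ0 : Γ0 ∈ Set.Ioo (0:ℝ) 1) (hΓ1 : Γ1 ∈ Set.Ioo (0:ℝ) 1)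
    (ρ : ℝ) (hρ : 0 < ρ) (L : ℕ → ℕ) (hL : IsAdmissible ρ L)
    (D S : ℕ → Ω → ℕ)
    (hDS : ∀ n, 2 ≤ n → IsCompoundBinomialPair P μ1 μ0 Γ1 Γ0 n (L n) (D n) (S n)) :
    (1 + ρ * Real.log (Γ1 ^ μ1 * Γ0 ^ μ0) < 0 →
      Tendsto (fun n => P {ω | D n ω = 0}) atTop (nhds (1 : ℝ≥0∞))) ∧
    (0 < 1 + ρ * Real.log (Γ1 ^ μ1 * Γ0 ^ μ0) →
      Tendsto (fun n => P {ω | D n ω = 0}) atTop (nhds (0 : ℝ≥0∞))) :=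
  stmt3_general P μ0 μ1 Γ0 Γ1 hμ1 hμ hΓ0 hΓ1 ρ hρ L hL D S hDS
end
end

section
/- Let ρ > 0 and let n ↦ L_n be a ρ-admissible scaling. For each n ≥ 2 let (D_n, S_n) be a compound-binomial degree pair with parameters (n, L_n). If 1 + ρ·ln(Γ(1)^{μ(1)} Γ(0)^{μ(0)}) < 0, then D_n converges in distribution to 0 (i.e. P(D_n = 0) → 1); if 1 + ρ·ln(Γ(1)^{μ(1)} Γ(0)^{μ(0)}) > 0, then D_n converges in distribution to ∞ in the sense that lim_{n→∞} P(D_n = d) = 0 for every fixed d = 0, 1, 2, …. -/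
open MeasureTheory ProbabilityTheory Filter Real
open scoped ENNReal NNReal

noncomputable section

/-! Conditionally on `S = ℓ`, `D` is binomial with success probability `q = Γ1^ℓ Γ0^(L-ℓ)`, and
for every real `s` the moment `E[q^s]` equals `M(s)^L` with `M(s) = μ1 Γ1^s + μ0 Γ0^s`. Since
`L_n ~ ρ ln n`, `n^a M(s)^(L_n) → 0` as soon as `a + ρ ln M(s) < 0`, and the derivative of
`ρ ln M` at `0` is `ρ ln(Γ1^μ1 Γ0^μ0)`.

In the subcritical case `P(D = 0) ≥ 1 - E[(nq)^s] = 1 - n^s M(s)^L` for a small `s ∈ (0, 1)`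
with `s + ρ ln M(s) < 0`. In the supercritical case fix `-ρ ln(Γ1^μ1 Γ0^μ0) < θ < 1` and split
according to `q < n^(-θ)`, whose probability is bounded by the negative moment `E[q^(-s)]`, and
`q ≥ n^(-θ)`, where the binomial point probability is at most `ψ(n q) ≤ ψ(n^(1-θ))` for
`ψ(x) = x^d e^(-x/2)`. -/

open Finset

def binomialTerm (n k : ℕ) (p : ℝ) : ℝ := n.choose k * p ^ k * (1 - p) ^ (n - k)

section BinomialTerm

variable {n k : ℕ} {p : ℝ}

lemma binomialTerm_nonneg (hp0 : 0 ≤ p) (hp1 : p ≤ 1) : 0 ≤ binomialTerm n k p := by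
  have : 0 ≤ 1 - p := by linarith
  unfold binomialTerm; positivity

lemma sum_binomialTerm_mul (n : ℕ) (p a b : ℝ) :
    ∑ k ∈ range (n + 1), binomialTerm n k p * (a ^ k * b ^ (n - k)) =
      (p * a + (1 - p) * b) ^ n := by
  rw [add_pow]
  refine sum_congr rfl fun k _ => ?_
  simp only [binomialTerm, mul_pow]
  ring

lemma sum_binomialTerm (n : ℕ) (p : ℝ) : ∑ k ∈ range (n + 1), binomialTerm n k p = 1 := by
  simpa using sum_binomialTerm_mul n p 1 1

lemma binomialTerm_le_one (hk : k ≤ n) (hp0 : 0 ≤ p) (hp1 : p ≤ 1) :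
    binomialTerm n k p ≤ 1 :=
  (sum_binomialTerm n p).le.trans' <|
    single_le_sum (f := fun j => binomialTerm n j p) (fun _ _ => binomialTerm_nonneg hp0 hp1)
      (mem_range.mpr (Nat.lt_succ_of_le hk))

lemma one_sub_rpow_le_binomialTerm_zero {s : ℝ} (hs0 : 0 < s) (hs1 : s ≤ 1)
    (hp0 : 0 ≤ p) (hp1 : p ≤ 1) : 1 - (n * p) ^ s ≤ binomialTerm n 0 p := by
  have hpow : 0 ≤ (1 - p) ^ n := pow_nonneg (by linarith) n
  have hbern : 1 - n * p ≤ (1 - p) ^ n := by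
    simpa [sub_eq_add_neg] using one_add_mul_le_pow (show (-2 : ℝ) ≤ -p by linarith) n
  simp only [binomialTerm, Nat.choose_zero_right, Nat.cast_one, pow_zero, one_mul, Nat.sub_zero]
  rcases le_total ((n : ℝ) * p) 1 with h | h
  · have : (n : ℝ) * p ≤ (n * p) ^ s := by
      simpa using rpow_le_rpow_of_exponent_ge' (by positivity) h hs0.le hs1
    linarith
  · linarith [one_le_rpow h hs0.le]

lemma binomialTerm_le_pow_mul_exp (hk : 2 * k ≤ n) (hp0 : 0 ≤ p) (hp1 : p ≤ 1) :
    binomialTerm n k p ≤ (n * p) ^ k * exp (-(n * p) / 2) := by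
  have hchoose : (n.choose k : ℝ) ≤ (n : ℝ) ^ k := by exact_mod_cast Nat.choose_le_pow n k
  have hexp : (1 - p) ^ (n - k) ≤ exp (-(n * p) / 2) := by
    have hnk : (n : ℝ) / 2 ≤ ((n - k : ℕ) : ℝ) := by
      rw [Nat.cast_sub (by omega)]
      linarith [show (2 * k : ℝ) ≤ n by exact_mod_cast hk]
    calc (1 - p) ^ (n - k) ≤ exp (-p) ^ (n - k) :=
          pow_le_pow_left₀ (by linarith) (one_sub_le_exp_neg p) _
      _ = exp (-(((n - k : ℕ) : ℝ) * p)) := by rw [← exp_nat_mul]; ring_nf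
      _ ≤ exp (-(n * p) / 2) := exp_le_exp.mpr (by nlinarith)
  calc binomialTerm n k p ≤ (n : ℝ) ^ k * p ^ k * exp (-(n * p) / 2) := by
        unfold binomialTerm
        gcongr
    _ = (n * p) ^ k * exp (-(n * p) / 2) := by rw [mul_pow]

end BinomialTerm

lemma pow_mul_exp_neg_half_le (k : ℕ) {x y : ℝ} (hx : 2 * k ≤ x) (hxy : x ≤ y) :
    y ^ k * exp (-y / 2) ≤ x ^ k * exp (-x / 2) := by
  rcases k.eq_zero_or_pos with rfl | hk
  · simpa using exp_le_exp.mpr (by linarith)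
  have hx0 : 0 < x := lt_of_lt_of_le (by positivity) hx
  have hy0 : 0 < y := hx0.trans_le hxy
  -- `y / x ≤ exp (y / x - 1)` and `k / x ≤ 1 / 2`
  have hratio : (y / x) ^ k ≤ exp ((y - x) / 2) := by
    calc (y / x) ^ k ≤ exp ((y - x) / x) ^ k := by
          gcongr
          linarith [add_one_le_exp ((y - x) / x), show (y - x) / x + 1 = y / x by field_simp; ring]
      _ = exp (k * ((y - x) / x)) := (exp_nat_mul _ k).symm
      _ ≤ exp ((y - x) / 2) := by
          gcongr
          rw [mul_div_assoc', div_le_div_iff₀ hx0 two_pos]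
          nlinarith
  calc y ^ k * exp (-y / 2) = x ^ k * ((y / x) ^ k * exp (-y / 2)) := by
        rw [div_pow]; field_simp
    _ ≤ x ^ k * (exp ((y - x) / 2) * exp (-y / 2)) := by gcongr
    _ = x ^ k * exp (-x / 2) := by rw [← exp_add]; ring_nf

lemma tendsto_pow_mul_exp_neg_half (k : ℕ) :
    Tendsto (fun x : ℝ => x ^ k * exp (-x / 2)) atTop (nhds 0) := by
  have h := ((tendsto_pow_mul_exp_neg_atTop_nhds_zero k).comp
    (tendsto_id.atTop_div_const two_pos)).const_mul ((2 : ℝ) ^ k)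
  rw [mul_zero] at h
  refine h.congr fun x => ?_
  simp only [Function.comp_apply, id, div_pow, neg_div]
  field_simp

lemma binomialTerm_le_rpow_add {m d : ℕ} {q t s : ℝ} (hq0 : 0 < q) (hq1 : q ≤ 1) (ht : 0 < t)
    (hs : 0 ≤ s) (hdm : 2 * d ≤ m) (hdt : 2 * d ≤ m * t) :
    binomialTerm m d q ≤ t ^ s * q⁻¹ ^ s + (m * t) ^ d * exp (-(m * t) / 2) := by
  have hψ : 0 ≤ (m * t) ^ d * exp (-(m * t) / 2) := by positivity
  rcases lt_or_ge q t with hqt | htq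
  · have : 1 ≤ t ^ s * q⁻¹ ^ s := by
      rw [← mul_rpow ht.le (by positivity), ← div_eq_mul_inv]
      exact one_le_rpow ((one_le_div hq0).mpr hqt.le) hs
    linarith [binomialTerm_le_one (by omega : d ≤ m) hq0.le hq1]
  · have : binomialTerm m d q ≤ (m * t) ^ d * exp (-(m * t) / 2) :=
      (binomialTerm_le_pow_mul_exp hdm hq0.le hq1).trans
        (pow_mul_exp_neg_half_le d hdt (by gcongr))
    linarith [show 0 ≤ t ^ s * q⁻¹ ^ s by positivity]

def linkProb (a b : ℝ) (L ℓ : ℕ) : ℝ := a ^ ℓ * b ^ (L - ℓ)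

def powMoment (p a b s : ℝ) : ℝ := p * a ^ s + (1 - p) * b ^ s

section LinkProb

variable {a b : ℝ} {L ℓ : ℕ}

lemma linkProb_pos (ha : 0 < a) (hb : 0 < b) : 0 < linkProb a b L ℓ := by
  unfold linkProb; positivity

lemma linkProb_nonneg (ha : 0 ≤ a) (hb : 0 ≤ b) : 0 ≤ linkProb a b L ℓ := by
  unfold linkProb; positivity

lemma linkProb_le_one (ha0 : 0 ≤ a) (ha1 : a ≤ 1) (hb0 : 0 ≤ b) (hb1 : b ≤ 1) :
    linkProb a b L ℓ ≤ 1 :=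
  mul_le_one₀ (pow_le_one₀ ha0 ha1) (pow_nonneg hb0 _) (pow_le_one₀ hb0 hb1)

lemma linkProb_inv : (linkProb a b L ℓ)⁻¹ = linkProb a⁻¹ b⁻¹ L ℓ := by
  simp only [linkProb, mul_inv, inv_pow]

lemma linkProb_rpow (ha : 0 < a) (hb : 0 < b) (s : ℝ) :
    linkProb a b L ℓ ^ s = linkProb (a ^ s) (b ^ s) L ℓ := by
  rw [linkProb, linkProb, mul_rpow (by positivity) (by positivity)]
  simp only [← rpow_natCast, ← rpow_mul ha.le, ← rpow_mul hb.le, mul_comm s]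

lemma sum_binomialTerm_mul_linkProb_rpow (ha : 0 < a) (hb : 0 < b) (p s : ℝ) (L : ℕ) :
    ∑ ℓ ∈ range (L + 1), binomialTerm L ℓ p * linkProb a b L ℓ ^ s = powMoment p a b s ^ L := by
  simp only [linkProb_rpow ha hb]
  exact sum_binomialTerm_mul L p _ _

lemma powMoment_zero (p a b : ℝ) : powMoment p a b 0 = 1 := by simp [powMoment]

lemma powMoment_pos {p : ℝ} (hp0 : 0 ≤ p) (hp1 : p ≤ 1) (ha : 0 < a) (hb : 0 < b) (s : ℝ) :
    0 < powMoment p a b s := by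
  rcases hp0.eq_or_lt with rfl | hp
  · simpa [powMoment] using rpow_pos_of_pos hb s
  · have : 0 ≤ 1 - p := by linarith
    unfold powMoment; positivity

lemma hasDerivAt_log_powMoment (ha : 0 < a) (hb : 0 < b) (p : ℝ) :
    HasDerivAt (fun s => Real.log (powMoment p a b s))
      (p * Real.log a + (1 - p) * Real.log b) 0 := by
  have hderiv : HasDerivAt (powMoment p a b) (p * Real.log a + (1 - p) * Real.log b) 0 := by
    have hpow : ∀ {c : ℝ}, 0 < c → HasDerivAt (fun s : ℝ => c ^ s) (Real.log c) 0 := fun hc => by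
      simpa using (hasStrictDerivAt_const_rpow hc 0).hasDerivAt
    exact ((hpow ha).const_mul p).add ((hpow hb).const_mul (1 - p))
  simpa [powMoment_zero] using hderiv.log (by simp [powMoment_zero])

end LinkProb

def degreePmf (p a b : ℝ) (n L d : ℕ) : ℝ :=
  ∑ ℓ ∈ range (L + 1), binomialTerm L ℓ p * binomialTerm (n - 1) d (linkProb a b L ℓ)

section DegreePmf

variable {p a b : ℝ} {n L d : ℕ}

lemma degreePmf_nonneg (hp0 : 0 ≤ p) (hp1 : p ≤ 1) (ha0 : 0 ≤ a) (ha1 : a ≤ 1) (hb0 : 0 ≤ b)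
    (hb1 : b ≤ 1) : 0 ≤ degreePmf p a b n L d :=
  sum_nonneg fun _ _ => mul_nonneg (binomialTerm_nonneg hp0 hp1)
    (binomialTerm_nonneg (linkProb_nonneg ha0 hb0) (linkProb_le_one ha0 ha1 hb0 hb1))

lemma degreePmf_le_one (hp0 : 0 ≤ p) (hp1 : p ≤ 1) (ha0 : 0 ≤ a) (ha1 : a ≤ 1) (hb0 : 0 ≤ b)
    (hb1 : b ≤ 1) (hd : d ≤ n - 1) : degreePmf p a b n L d ≤ 1 := by
  calc degreePmf p a b n L d ≤ ∑ ℓ ∈ range (L + 1), binomialTerm L ℓ p * 1 := by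
        refine sum_le_sum fun ℓ _ => ?_
        gcongr
        · exact binomialTerm_nonneg hp0 hp1
        · exact binomialTerm_le_one hd (linkProb_nonneg ha0 hb0)
            (linkProb_le_one ha0 ha1 hb0 hb1)
    _ = 1 := by simp [sum_binomialTerm]

lemma one_sub_le_degreePmf_zero {s : ℝ} (hs0 : 0 < s) (hs1 : s ≤ 1) (hp0 : 0 ≤ p) (hp1 : p ≤ 1)
    (ha0 : 0 < a) (ha1 : a ≤ 1) (hb0 : 0 < b) (hb1 : b ≤ 1) :
    1 - (n : ℝ) ^ s * powMoment p a b s ^ L ≤ degreePmf p a b n L 0 := by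
  have hm : ((n - 1 : ℕ) : ℝ) ^ s ≤ (n : ℝ) ^ s := by gcongr; omega
  calc 1 - (n : ℝ) ^ s * powMoment p a b s ^ L
      ≤ 1 - ((n - 1 : ℕ) : ℝ) ^ s * powMoment p a b s ^ L := by
        nlinarith [pow_pos (powMoment_pos hp0 hp1 ha0 hb0 s) L]
    _ = ∑ ℓ ∈ range (L + 1),
          binomialTerm L ℓ p * (1 - (((n - 1 : ℕ) : ℝ) * linkProb a b L ℓ) ^ s) := by
        simp only [mul_sub, mul_one, sum_sub_distrib, sum_binomialTerm,
          mul_rpow (Nat.cast_nonneg _) (linkProb_pos ha0 hb0).le, mul_left_comm _ (_ ^ s),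
          ← mul_sum, sum_binomialTerm_mul_linkProb_rpow ha0 hb0]
    _ ≤ degreePmf p a b n L 0 := sum_le_sum fun ℓ _ => by
        gcongr
        · exact binomialTerm_nonneg hp0 hp1
        · exact one_sub_rpow_le_binomialTerm_zero hs0 hs1 (linkProb_pos ha0 hb0).le
            (linkProb_le_one ha0.le ha1 hb0.le hb1)

lemma degreePmf_le {s t : ℝ} (hs : 0 ≤ s) (ht : 0 < t) (hp0 : 0 ≤ p) (hp1 : p ≤ 1)
    (ha0 : 0 < a) (ha1 : a ≤ 1) (hb0 : 0 < b) (hb1 : b ≤ 1) (hdm : 2 * d ≤ n - 1)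
    (hdt : 2 * d ≤ ((n - 1 : ℕ) : ℝ) * t) :
    degreePmf p a b n L d ≤ t ^ s * powMoment p a⁻¹ b⁻¹ s ^ L +
      (((n - 1 : ℕ) : ℝ) * t) ^ d * exp (-(((n - 1 : ℕ) : ℝ) * t) / 2) := by
  calc degreePmf p a b n L d
      ≤ ∑ ℓ ∈ range (L + 1), binomialTerm L ℓ p * (t ^ s * linkProb a⁻¹ b⁻¹ L ℓ ^ s +
          (((n - 1 : ℕ) : ℝ) * t) ^ d * exp (-(((n - 1 : ℕ) : ℝ) * t) / 2)) :=
        sum_le_sum fun ℓ _ => by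
          gcongr
          · exact binomialTerm_nonneg hp0 hp1
          · rw [← linkProb_inv]
            exact binomialTerm_le_rpow_add (linkProb_pos ha0 hb0)
              (linkProb_le_one ha0.le ha1 hb0.le hb1) ht hs hdm hdt
    _ = _ := by
        simp only [mul_add, sum_add_distrib, ← sum_mul, sum_binomialTerm, one_mul,
          mul_left_comm _ (t ^ s), ← mul_sum,
          sum_binomialTerm_mul_linkProb_rpow (inv_pos.mpr ha0) (inv_pos.mpr hb0)]

end DegreePmf

lemma eventually_neg_of_hasDerivAt {f : ℝ → ℝ} {c : ℝ} (hf : HasDerivAt f c 0) (h0 : f 0 = 0)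
    (hc : c < 0) : ∀ᶠ s in nhdsWithin 0 (Set.Ioi 0), f s < 0 := by
  have hslope : Tendsto (slope f 0) (nhdsWithin 0 (Set.Ioi 0)) (nhds c) :=
    (hasDerivAt_iff_tendsto_slope.mp hf).mono_left (nhdsWithin_mono 0 fun x hx => ne_of_gt hx)
  filter_upwards [hslope.eventually_lt_const hc, self_mem_nhdsWithin] with s hs (hs0 : 0 < s)
  rw [slope_def_field, h0, sub_zero, sub_zero] at hs
  exact ((div_neg_iff.mp hs).resolve_left fun h => (h.2.trans hs0).false).1

lemma tendsto_rpow_mul_pow_of_isAdmissible {ρ : ℝ} (hρ : 0 < ρ) {L : ℕ → ℕ}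
    (hL : IsAdmissible ρ L) {a g : ℝ} (hg : 0 < g) (h : a + ρ * Real.log g < 0) :
    Tendsto (fun n : ℕ => (n : ℝ) ^ a * g ^ L n) atTop (nhds 0) := by
  have hexponent : Tendsto
      (fun n : ℕ => Real.log n * (a + (L n : ℝ) / (ρ * Real.log n) * (ρ * Real.log g)))
      atTop atBot := by
    refine Tendsto.atTop_mul_neg (C := a + 1 * (ρ * Real.log g)) (by linarith)
      (tendsto_log_atTop.comp tendsto_natCast_atTop_atTop) ?_
    exact tendsto_const_nhds.add (hL.2.mul tendsto_const_nhds)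
  refine (tendsto_exp_atBot.comp hexponent).congr' ?_
  filter_upwards [eventually_ge_atTop 2] with n hn
  have hlog : 0 < Real.log n := Real.log_pos (by exact_mod_cast hn)
  rw [Function.comp_apply, rpow_def_of_pos (by positivity), ← exp_log (pow_pos hg (L n)),
    ← exp_add, Real.log_pow]
  congr 1
  field_simp

lemma tendsto_natSub_one_mul_rpow_neg {θ : ℝ} (hθ : θ < 1) :
    Tendsto (fun n : ℕ => ((n - 1 : ℕ) : ℝ) * (n : ℝ) ^ (-θ)) atTop atTop := by
  have hfactor : Tendsto (fun n : ℕ => 1 - (n : ℝ)⁻¹) atTop (nhds 1) := by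
    simpa using tendsto_const_nhds.sub (tendsto_inv_atTop_nhds_zero_nat (𝕜 := ℝ))
  refine (hfactor.pos_mul_atTop one_pos
    ((tendsto_rpow_atTop (by linarith : 0 < 1 - θ)).comp tendsto_natCast_atTop_atTop)).congr' ?_
  filter_upwards [eventually_ge_atTop 1] with n hn
  have hn0 : (0 : ℝ) < n := by exact_mod_cast hn
  rw [Function.comp_apply, sub_eq_add_neg 1 θ, rpow_add hn0, rpow_one, Nat.cast_sub hn,
    Nat.cast_one]
  field_simp

section Limits

variable {p a b ρ : ℝ} {L : ℕ → ℕ}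

lemma tendsto_degreePmf_zero_nhds_one (hp0 : 0 ≤ p) (hp1 : p ≤ 1) (ha0 : 0 < a) (ha1 : a ≤ 1)
    (hb0 : 0 < b) (hb1 : b ≤ 1) (hρ : 0 < ρ) (hL : IsAdmissible ρ L)
    (h : 1 + ρ * (p * Real.log a + (1 - p) * Real.log b) < 0) :
    Tendsto (fun n => degreePmf p a b n (L n) 0) atTop (nhds 1) := by
  have hderiv : HasDerivAt (fun s => s + ρ * Real.log (powMoment p a b s))
      (1 + ρ * (p * Real.log a + (1 - p) * Real.log b)) 0 :=
    (hasDerivAt_id 0).add ((hasDerivAt_log_powMoment ha0 hb0 p).const_mul ρ)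
  have hsmall := (eventually_neg_of_hasDerivAt hderiv (by simp [powMoment_zero]) h).and
    (eventually_nhdsWithin_of_eventually_nhds (eventually_lt_nhds one_pos))
  obtain ⟨s, ⟨hneg, hs1⟩, hs⟩ := (hsmall.and self_mem_nhdsWithin).exists
  have hlim := tendsto_rpow_mul_pow_of_isAdmissible hρ hL (powMoment_pos hp0 hp1 ha0 hb0 s) hneg
  refine tendsto_of_tendsto_of_tendsto_of_le_of_le (by simpa using tendsto_const_nhds.sub hlim)
    tendsto_const_nhds (fun n => one_sub_le_degreePmf_zero hs hs1.le hp0 hp1 ha0 ha1 hb0 hb1)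
    (fun n => degreePmf_le_one hp0 hp1 ha0.le ha1 hb0.le hb1 (Nat.zero_le _))

lemma tendsto_degreePmf_nhds_zero (hp0 : 0 ≤ p) (hp1 : p ≤ 1) (ha0 : 0 < a) (ha1 : a ≤ 1)
    (hb0 : 0 < b) (hb1 : b ≤ 1) (hρ : 0 < ρ) (hL : IsAdmissible ρ L)
    (h : 0 < 1 + ρ * (p * Real.log a + (1 - p) * Real.log b)) (d : ℕ) :
    Tendsto (fun n => degreePmf p a b n (L n) d) atTop (nhds 0) := by
  obtain ⟨θ, hθ, hθ1⟩ :=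
    exists_between (show -(ρ * (p * Real.log a + (1 - p) * Real.log b)) < 1 by linarith)
  have hderiv : HasDerivAt (fun s => ρ * Real.log (powMoment p a⁻¹ b⁻¹ s) - θ * s)
      (-(ρ * (p * Real.log a + (1 - p) * Real.log b)) - θ) 0 := by
    have h := ((hasDerivAt_log_powMoment (inv_pos.mpr ha0) (inv_pos.mpr hb0) p).const_mul ρ).sub
      ((hasDerivAt_id 0).const_mul θ)
    rw [Real.log_inv, Real.log_inv] at h
    exact h.congr_deriv (by ring)
  obtain ⟨s, hneg, hs⟩ := ((eventually_neg_of_hasDerivAt hderiv (by simp [powMoment_zero])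
    (by linarith)).and self_mem_nhdsWithin).exists
  have hmoment : Tendsto (fun n : ℕ => (n : ℝ) ^ (-(θ * s)) * powMoment p a⁻¹ b⁻¹ s ^ L n)
      atTop (nhds 0) :=
    tendsto_rpow_mul_pow_of_isAdmissible hρ hL
      (powMoment_pos hp0 hp1 (inv_pos.mpr ha0) (inv_pos.mpr hb0) s) (by linarith)
  have hc := tendsto_natSub_one_mul_rpow_neg (show θ < 1 by linarith)
  have htail := (tendsto_pow_mul_exp_neg_half d).comp hc
  refine tendsto_of_tendsto_of_tendsto_of_le_of_le' tendsto_const_nhds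
    (by simpa using hmoment.add htail)
    (Eventually.of_forall fun n => degreePmf_nonneg hp0 hp1 ha0.le ha1 hb0.le hb1) ?_
  filter_upwards [eventually_ge_atTop (2 * d + 1), hc.eventually_ge_atTop (2 * d)]
    with n hn hcn
  have hn0 : (0 : ℝ) < n := by exact_mod_cast (show 0 < n by omega)
  calc degreePmf p a b n (L n) d
      ≤ ((n : ℝ) ^ (-θ)) ^ s * powMoment p a⁻¹ b⁻¹ s ^ L n +
          (((n - 1 : ℕ) : ℝ) * (n : ℝ) ^ (-θ)) ^ d *
            exp (-(((n - 1 : ℕ) : ℝ) * (n : ℝ) ^ (-θ)) / 2) :=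
        degreePmf_le hs.le (by positivity) hp0 hp1 ha0 ha1 hb0 hb1 (by omega) hcn
    _ = _ := by rw [← rpow_mul hn0.le, neg_mul]

end Limits

lemma measure_eq_sum_of_sum_measure_singleton_eq_one {α : Type*} [MeasurableSpace α]
    [MeasurableSingletonClass α] {ν : Measure α} [IsProbabilityMeasure ν] {F : Finset α}
    (hF : ∑ x ∈ F, ν {x} = 1) (q : α → Prop) [DecidablePred q] :
    ν {x | q x} = ∑ x ∈ F with q x, ν {x} := by
  have hnull : ν (↑F)ᶜ = 0 := by
    rwa [prob_compl_eq_zero_iff F.measurableSet, ← sum_measure_singleton]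
  rw [sum_measure_singleton, coe_filter, ← measure_inter_conull hnull]
  congr 1
  ext x
  simp [and_comm]

lemma IsCompoundBinomialPair.measure_eq_ofReal_degreePmf {Ω : Type*} [MeasurableSpace Ω]
    {P : Measure Ω} [IsProbabilityMeasure P] {p a b : ℝ} {n L d : ℕ} {D S : Ω → ℕ}
    (h : IsCompoundBinomialPair P p (1 - p) a b n L D S) (hp0 : 0 ≤ p) (hp1 : p ≤ 1)
    (ha0 : 0 ≤ a) (ha1 : a ≤ 1) (hb0 : 0 ≤ b) (hb1 : b ≤ 1) (hd : d ≤ n - 1) :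
    P {ω | D ω = d} = ENNReal.ofReal (degreePmf p a b n L d) := by
  obtain ⟨hD, hS, hjoint⟩ := h
  set joint : ℕ × ℕ → ℝ :=
    fun x => binomialTerm L x.2 p * binomialTerm (n - 1) x.1 (linkProb a b L x.2)
  have hjoint_nonneg : ∀ x, 0 ≤ joint x := fun x => mul_nonneg (binomialTerm_nonneg hp0 hp1)
    (binomialTerm_nonneg (linkProb_nonneg ha0 hb0) (linkProb_le_one ha0 ha1 hb0 hb1))
  have hX : Measurable fun ω => (D ω, S ω) := hD.prodMk hS
  have := Measure.isProbabilityMeasure_map (μ := P) hX.aemeasurable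
  set F := range (n - 1 + 1) ×ˢ range (L + 1)
  have hsingleton : ∀ x ∈ F, P.map (fun ω => (D ω, S ω)) {x} = ENNReal.ofReal (joint x) := by
    intro x hx
    rw [mem_product, mem_range, mem_range] at hx
    rw [Measure.map_apply hX (measurableSet_singleton x)]
    convert hjoint x.1 (by omega) x.2 (by omega) using 2
    · ext ω; simp [Prod.ext_iff]
    · simp only [joint, binomialTerm, linkProb]; ring
  have hmass : ∑ x ∈ F, P.map (fun ω => (D ω, S ω)) {x} = 1 := by
    rw [sum_congr rfl hsingleton, ← ENNReal.ofReal_sum_of_nonneg fun x _ => hjoint_nonneg x,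
      sum_product, sum_comm]
    simp [joint, ← mul_sum, sum_binomialTerm]
  calc P {ω | D ω = d}
      = P.map (fun ω => (D ω, S ω)) {x | x.1 = d} := by
        rw [Measure.map_apply hX (s := {x | x.1 = d}) (measurable_fst (measurableSet_singleton d))]
        rfl
    _ = ∑ ℓ ∈ range (L + 1), ENNReal.ofReal (joint (d, ℓ)) := by
        rw [measure_eq_sum_of_sum_measure_singleton_eq_one hmass]
        simp only [F]
        rw [filter_product_left (· = d), filter_eq', if_pos (mem_range.mpr (by omega)),
          sum_product, sum_singleton]
        exact sum_congr rfl fun ℓ hℓ =>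
          hsingleton (d, ℓ) (mem_product.mpr ⟨mem_range.mpr (by omega), hℓ⟩)
    _ = ENNReal.ofReal (degreePmf p a b n L d) :=
        (ENNReal.ofReal_sum_of_nonneg fun ℓ _ => hjoint_nonneg (d, ℓ)).symm

theorem stmt4_general {Ω : Type*} [MeasurableSpace Ω] (P : Measure Ω) [IsProbabilityMeasure P]
    (μ0 μ1 Γ0 Γ1 : ℝ) (hμ1 : μ1 ∈ Set.Ioo (0:ℝ) 1)
    (hμ : μ0 + μ1 = 1) (hΓ0 : Γ0 ∈ Set.Ioo (0:ℝ) 1) (hΓ1 : Γ1 ∈ Set.Ioo (0:ℝ) 1)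
    (ρ : ℝ) (hρ : 0 < ρ) (L : ℕ → ℕ) (hL : IsAdmissible ρ L)
    (D S : ℕ → Ω → ℕ)
    (hDS : ∀ n, 2 ≤ n → IsCompoundBinomialPair P μ1 μ0 Γ1 Γ0 n (L n) (D n) (S n)) :
    (1 + ρ * Real.log (Γ1 ^ μ1 * Γ0 ^ μ0) < 0 →
      Tendsto (fun n => P {ω | D n ω = 0}) atTop (nhds (1 : ℝ≥0∞))) ∧
    (0 < 1 + ρ * Real.log (Γ1 ^ μ1 * Γ0 ^ μ0) →
      ∀ d : ℕ, Tendsto (fun n => P {ω | D n ω = d}) atTop (nhds (0 : ℝ≥0∞))) := by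
  obtain rfl : μ0 = 1 - μ1 := by linarith
  obtain ⟨hμ1₀, hμ1₁⟩ := hμ1
  obtain ⟨hΓ0₀, hΓ0₁⟩ := hΓ0
  obtain ⟨hΓ1₀, hΓ1₁⟩ := hΓ1
  have hlog : Real.log (Γ1 ^ μ1 * Γ0 ^ (1 - μ1)) = μ1 * Real.log Γ1 + (1 - μ1) * Real.log Γ0 := by
    rw [Real.log_mul (rpow_pos_of_pos hΓ1₀ _).ne' (rpow_pos_of_pos hΓ0₀ _).ne',
      Real.log_rpow hΓ1₀, Real.log_rpow hΓ0₀]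
  have hpmf : ∀ d, (fun n => ENNReal.ofReal (degreePmf μ1 Γ1 Γ0 n (L n) d)) =ᶠ[atTop]
      fun n => P {ω | D n ω = d} := fun d => by
    filter_upwards [eventually_ge_atTop (d + 2)] with n hn
    exact ((hDS n (by omega)).measure_eq_ofReal_degreePmf hμ1₀.le hμ1₁.le hΓ1₀.le hΓ1₁.le
      hΓ0₀.le hΓ0₁.le (by omega)).symm
  rw [hlog]
  refine ⟨fun h => ?_, fun h d => ?_⟩
  · rw [← ENNReal.ofReal_one]
    exact (ENNReal.tendsto_ofReal (tendsto_degreePmf_zero_nhds_one hμ1₀.le hμ1₁.le hΓ1₀ hΓ1₁.le hΓ0₀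
      hΓ0₁.le hρ hL h)).congr' (hpmf 0)
  · rw [← ENNReal.ofReal_zero]
    exact (ENNReal.tendsto_ofReal (tendsto_degreePmf_nhds_zero hμ1₀.le hμ1₁.le hΓ1₀ hΓ1₁.le hΓ0₀
      hΓ0₁.le hρ hL h d)).congr' (hpmf d)

/-- the degree rvs admit only trivial limits: `D_n ⇒ 0` if
`1 + ρ ln(Γ1^μ1 Γ0^μ0) < 0`, and `D_n ⇒ ∞` if `1 + ρ ln(Γ1^μ1 Γ0^μ0) > 0`. -/
theorem stmt4 {Ω : Type*} [MeasurableSpace Ω] (P : Measure Ω) [IsProbabilityMeasure P]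
    (μ0 μ1 Γ0 Γ1 : ℝ) (hμ0 : μ0 ∈ Set.Ioo (0:ℝ) 1) (hμ1 : μ1 ∈ Set.Ioo (0:ℝ) 1)
    (hμ : μ0 + μ1 = 1) (hΓ0 : Γ0 ∈ Set.Ioo (0:ℝ) 1) (hΓ1 : Γ1 ∈ Set.Ioo (0:ℝ) 1)
    (ρ : ℝ) (hρ : 0 < ρ) (L : ℕ → ℕ) (hL : IsAdmissible ρ L)
    (D S : ℕ → Ω → ℕ)
    (hDS : ∀ n, 2 ≤ n → IsCompoundBinomialPair P μ1 μ0 Γ1 Γ0 n (L n) (D n) (S n)) :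
    (1 + ρ * Real.log (Γ1 ^ μ1 * Γ0 ^ μ0) < 0 →
      Tendsto (fun n => P {ω | D n ω = 0}) atTop (nhds (1 : ℝ≥0∞))) ∧
    (0 < 1 + ρ * Real.log (Γ1 ^ μ1 * Γ0 ^ μ0) →
      ∀ d : ℕ, Tendsto (fun n => P {ω | D n ω = d}) atTop (nhds (0 : ℝ≥0∞))) :=
  stmt4_general P μ0 μ1 Γ0 Γ1 hμ1 hμ hΓ0 hΓ1 ρ hρ L hL D S hDS
end
end

section
/- Assume 1 + ρ·ln(Γ(1)^{μ(1)} Γ(0)^{μ(0)}) > 0 for some ρ > 0, and let n ↦ L_n be a ρ-admissible scaling. For each n ≥ 2 let (D_n, S_n) be a compound-binomial degree pair with parameters (n, L_n). Then the ratio of the degree to its conditional mean converges to 1 in probability: for every δ > 0, lim_{n→∞} P( | D_n / ((n−1) Γ(1)^{S_n} Γ(0)^{L_n − S_n}) − 1 | > δ ) = 0. -/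
open MeasureTheory ProbabilityTheory Filter Real
open scoped ENNReal NNReal

noncomputable section

/-! Chebyshev's inequality, used twice. `S_n` is Binomial(`L_n`, `μ1`), so with probability
`1 - O(1/L_n)` it lies in the window `|S_n - μ1 L_n| ≤ ε L_n`, on which the success probability
`p = Γ1^S Γ0^(L-S)` is at least `exp ((g - ε K) L_n)` with `g = log (Γ1^μ1 Γ0^μ0)` and
`K = |log Γ1| + |log Γ0|`. Given `S`, `D` is Binomial(`n-1`, `p`), so its relative deviation
exceeds `δ` with probability at most `1 / (δ² (n-1) p)`. As `L_n ~ ρ ln n`, the product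
`(n-1) exp ((g - ε K) L_n) = n ^ (1 + ρ (g - ε K) + o(1))` tends to infinity once `ε` is small. -/

open Finset Topology

def binomialMass (N : ℕ) (p : ℝ) (d : ℕ) : ℝ := N.choose d * p ^ d * (1 - p) ^ (N - d)

lemma binomialMass_nonneg {N : ℕ} {p : ℝ} (hp0 : 0 ≤ p) (hp1 : p ≤ 1) (d : ℕ) :
    0 ≤ binomialMass N p d := by
  have : 0 ≤ 1 - p := sub_nonneg.2 hp1
  unfold binomialMass; positivity

lemma sum_binomialMass (N : ℕ) (p : ℝ) : ∑ d ∈ range (N + 1), binomialMass N p d = 1 := by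
  calc _ = ∑ d ∈ range (N + 1), p ^ d * (1 - p) ^ (N - d) * N.choose d :=
        sum_congr rfl fun d _ => by unfold binomialMass; ring
    _ = 1 := by rw [← add_pow, add_sub_cancel, one_pow]

lemma sum_sq_mul_binomialMass (N : ℕ) (p : ℝ) :
    ∑ d ∈ range (N + 1), ((N : ℝ) * p - d) ^ 2 * binomialMass N p d = N * p * (1 - p) := by
  have h := congrArg (Polynomial.eval p) (bernsteinPolynomial.variance ℝ N)
  simp only [Polynomial.eval_finsetSum, bernsteinPolynomial, Polynomial.eval_mul,
    Polynomial.eval_pow, Polynomial.eval_sub, Polynomial.eval_one, Polynomial.eval_natCast,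
    Polynomial.eval_X, nsmul_eq_mul] at h
  exact h

lemma sum_binomialMass_le_of_le_abs_sub {N : ℕ} {p t : ℝ} (hp0 : 0 ≤ p) (hp1 : p ≤ 1)
    (ht : 0 < t) {s : Finset ℕ} (hs : s ⊆ range (N + 1)) (hdev : ∀ d ∈ s, t ≤ |(d : ℝ) - N * p|) :
    ∑ d ∈ s, binomialMass N p d ≤ N * p * (1 - p) / t ^ 2 := by
  have hb := binomialMass_nonneg (N := N) hp0 hp1
  rw [← sum_sq_mul_binomialMass, sum_div]
  calc ∑ d ∈ s, binomialMass N p d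
      ≤ ∑ d ∈ s, ((N : ℝ) * p - d) ^ 2 * binomialMass N p d / t ^ 2 := by
        refine sum_le_sum fun d hd => ?_
        have hsq : t ^ 2 ≤ ((N : ℝ) * p - d) ^ 2 := by
          have := pow_le_pow_left₀ ht.le (hdev d hd) 2
          rwa [sq_abs, ← neg_sub, neg_sq] at this
        rw [le_div_iff₀ (by positivity)]
        nlinarith [hb d]
    _ ≤ ∑ d ∈ range (N + 1), ((N : ℝ) * p - d) ^ 2 * binomialMass N p d / t ^ 2 :=
        sum_le_sum_of_subset_of_nonneg hs fun d _ _ => by have := hb d; positivity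

def binomialRelDevTail (N : ℕ) (p δ : ℝ) : ℝ :=
  ∑ d ∈ range (N + 1) with δ < |((d : ℕ) : ℝ) / (N * p) - 1|, binomialMass N p d

lemma binomialRelDevTail_le_one {N : ℕ} {p : ℝ} (hp0 : 0 ≤ p) (hp1 : p ≤ 1) (δ : ℝ) :
    binomialRelDevTail N p δ ≤ 1 :=
  (sum_le_sum_of_subset_of_nonneg (filter_subset _ _) fun d _ _ =>
    binomialMass_nonneg hp0 hp1 d).trans (sum_binomialMass N p).le

lemma binomialRelDevTail_le {N : ℕ} {p δ : ℝ} (hN : 0 < N) (hp0 : 0 < p) (hp1 : p ≤ 1)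
    (hδ : 0 < δ) : binomialRelDevTail N p δ ≤ 1 / (δ ^ 2 * (N * p)) := by
  have hNp : 0 < (N : ℝ) * p := by positivity
  calc _ ≤ N * p * (1 - p) / (δ * (N * p)) ^ 2 := by
        refine sum_binomialMass_le_of_le_abs_sub hp0.le hp1 (by positivity) (filter_subset _ _)
          fun d hd => ?_
        have hrel := (mem_filter.1 hd).2
        rw [div_sub_one hNp.ne', abs_div, abs_of_pos hNp, lt_div_iff₀ hNp] at hrel
        linarith
    _ = (1 - p) / (δ ^ 2 * (N * p)) := by field_simp
    _ ≤ 1 / (δ ^ 2 * (N * p)) := by gcongr; linarith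

lemma measure_setOf_le_of_pmf {Ω α : Type*} [MeasurableSpace Ω] [MeasurableSpace α]
    [MeasurableSingletonClass α] {P : Measure Ω} [IsProbabilityMeasure P] {X : Ω → α}
    (hX : Measurable X) (T : Finset α) (q : α → ℝ) (hq : ∀ x ∈ T, 0 ≤ q x)
    (hsum : ∑ x ∈ T, q x = 1) (hpmf : ∀ x ∈ T, P (X ⁻¹' {x}) = ENNReal.ofReal (q x))
    (E : α → Prop) [DecidablePred E] :
    P {ω | E (X ω)} ≤ ENNReal.ofReal (∑ x ∈ T with E x, q x) := by
  have hmass : ∀ F ⊆ T, P (X ⁻¹' F) = ENNReal.ofReal (∑ x ∈ F, q x) := fun F hF => by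
    rw [← sum_measure_preimage_singleton F fun y _ => hX (measurableSet_singleton y),
      ENNReal.ofReal_sum_of_nonneg fun x hx => hq x (hF hx)]
    exact sum_congr rfl fun x hx => hpmf x (hF hx)
  have hout : P (X ⁻¹' T)ᶜ = 0 := by
    rw [prob_compl_eq_zero_iff (hX T.measurableSet), hmass T subset_rfl, hsum, ENNReal.ofReal_one]
  calc P {ω | E (X ω)} ≤ P (X ⁻¹' ↑(T.filter E) ∪ (X ⁻¹' T)ᶜ) := by
        refine measure_mono fun ω hω => ?_
        by_cases hT : X ω ∈ T
        · exact Or.inl (mem_filter.2 ⟨hT, hω⟩)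
        · exact Or.inr hT
    _ ≤ P (X ⁻¹' ↑(T.filter E)) + P (X ⁻¹' T)ᶜ := measure_union_le _ _
    _ = _ := by rw [hout, add_zero, hmass _ (filter_subset _ _)]

lemma sum_mul_le_add_sum_filter_not {ι : Type*} {s : Finset ι} {w I : ι → ℝ} {c : ℝ}
    (W : ι → Prop) [DecidablePred W] (hw : ∀ i ∈ s, 0 ≤ w i) (hw1 : ∑ i ∈ s, w i ≤ 1)
    (hI : ∀ i ∈ s, I i ≤ 1) (hIW : ∀ i ∈ s, W i → I i ≤ c) (hc : 0 ≤ c) :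
    ∑ i ∈ s, w i * I i ≤ c + ∑ i ∈ s with ¬W i, w i := by
  calc ∑ i ∈ s, w i * I i ≤ ∑ i ∈ s, (c * w i + if W i then 0 else w i) := by
        refine sum_le_sum fun i hi => ?_
        split_ifs with hWi
        · nlinarith [hw i hi, hIW i hi hWi]
        · nlinarith [hw i hi, hI i hi]
    _ ≤ c + ∑ i ∈ s with ¬W i, w i := by
        rw [sum_add_distrib, ← mul_sum, sum_filter]
        simp only [ite_not]
        gcongr
        nlinarith

lemma sum_binomialMass_mul_binomialRelDevTail_le {L N : ℕ} {μ1 δ ε pmin : ℝ} {p : ℕ → ℝ}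
    (hμ1 : μ1 ∈ Set.Ioo (0:ℝ) 1) (hL : 0 < L) (hN : 0 < N) (hδ : 0 < δ) (hε : 0 < ε)
    (hpmin : 0 < pmin) (hp0 : ∀ ℓ, 0 < p ℓ) (hp1 : ∀ ℓ, p ℓ ≤ 1)
    (hwin : ∀ ℓ ≤ L, |(ℓ : ℝ) - μ1 * L| ≤ ε * L → pmin ≤ p ℓ) :
    ∑ ℓ ∈ range (L + 1), binomialMass L μ1 ℓ * binomialRelDevTail N (p ℓ) δ
      ≤ μ1 * (1 - μ1) / (ε ^ 2 * L) + 1 / (δ ^ 2 * (N * pmin)) := by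
  have hwindow : ∀ ℓ ∈ range (L + 1), |(ℓ : ℝ) - μ1 * L| ≤ ε * L →
      binomialRelDevTail N (p ℓ) δ ≤ 1 / (δ ^ 2 * (N * pmin)) := fun ℓ hℓ hdev => by
    refine (binomialRelDevTail_le hN (hp0 ℓ) (hp1 ℓ) hδ).trans ?_
    gcongr
    exact hwin ℓ (Nat.lt_succ_iff.1 (mem_range.1 hℓ)) hdev
  have htail : ∑ ℓ ∈ range (L + 1) with ¬|((ℓ : ℕ) : ℝ) - μ1 * L| ≤ ε * L, binomialMass L μ1 ℓ
      ≤ μ1 * (1 - μ1) / (ε ^ 2 * L) := by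
    calc _ ≤ L * μ1 * (1 - μ1) / (ε * L) ^ 2 := by
          refine sum_binomialMass_le_of_le_abs_sub hμ1.1.le hμ1.2.le (by positivity)
            (filter_subset _ _) fun ℓ hℓ => ?_
          rw [mul_comm (L : ℝ)]
          exact (not_le.1 (mem_filter.1 hℓ).2).le
      _ = μ1 * (1 - μ1) / (ε ^ 2 * L) := by field_simp
  calc _ ≤ 1 / (δ ^ 2 * (N * pmin)) + ∑ ℓ ∈ range (L + 1) with ¬|((ℓ : ℕ) : ℝ) - μ1 * L| ≤ ε * L,
          binomialMass L μ1 ℓ :=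
        sum_mul_le_add_sum_filter_not _ (fun ℓ _ => binomialMass_nonneg hμ1.1.le hμ1.2.le ℓ)
          (sum_binomialMass L μ1).le (fun ℓ _ => binomialRelDevTail_le_one (hp0 ℓ).le (hp1 ℓ) δ)
          hwindow (by positivity)
    _ ≤ _ := by linarith

theorem IsCompoundBinomialPair.measure_abs_div_sub_one_gt_le {Ω : Type*} [MeasurableSpace Ω]
    {P : Measure Ω} [IsProbabilityMeasure P] {μ0 μ1 Γ0 Γ1 : ℝ} {n L : ℕ} {D S : Ω → ℕ}
    (h : IsCompoundBinomialPair P μ1 μ0 Γ1 Γ0 n L D S) (hμ1 : μ1 ∈ Set.Ioo (0:ℝ) 1)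
    (hμ : μ0 + μ1 = 1) (hΓ0 : Γ0 ∈ Set.Ioo (0:ℝ) 1) (hΓ1 : Γ1 ∈ Set.Ioo (0:ℝ) 1)
    (hn : 2 ≤ n) (hL : 0 < L) {δ ε pmin : ℝ} (hδ : 0 < δ) (hε : 0 < ε) (hpmin : 0 < pmin)
    (hwin : ∀ ℓ ≤ L, |(ℓ : ℝ) - μ1 * L| ≤ ε * L → pmin ≤ Γ1 ^ ℓ * Γ0 ^ (L - ℓ)) :
    P {ω | |(D ω : ℝ) / (((n : ℝ) - 1) * Γ1 ^ S ω * Γ0 ^ (L - S ω)) - 1| > δ}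
      ≤ ENNReal.ofReal (μ1 * μ0 / (ε ^ 2 * L) + 1 / (δ ^ 2 * (((n : ℝ) - 1) * pmin))) := by
  obtain ⟨hD, hS, hpmf⟩ := h
  obtain rfl : μ0 = 1 - μ1 := by linarith
  set N := n - 1
  have hN : (N : ℝ) = n - 1 := by rw [Nat.cast_sub (by omega), Nat.cast_one]
  set p : ℕ → ℝ := fun ℓ => Γ1 ^ ℓ * Γ0 ^ (L - ℓ)
  have hp0 : ∀ ℓ, 0 < p ℓ := fun ℓ => mul_pos (pow_pos hΓ1.1 _) (pow_pos hΓ0.1 _)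
  have hp1 : ∀ ℓ, p ℓ ≤ 1 := fun ℓ =>
    mul_le_one₀ (pow_le_one₀ hΓ1.1.le hΓ1.2.le) (pow_pos hΓ0.1 _).le
      (pow_le_one₀ hΓ0.1.le hΓ0.2.le)
  let q : ℕ × ℕ → ℝ := fun x => binomialMass L μ1 x.1 * binomialMass N (p x.1) x.2
  let T := range (L + 1) ×ˢ range (N + 1)
  have hq : ∀ x ∈ T, 0 ≤ q x := fun x _ => mul_nonneg
    (binomialMass_nonneg hμ1.1.le hμ1.2.le _) (binomialMass_nonneg (hp0 _).le (hp1 _) _)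
  have hsum : ∑ x ∈ T, q x = 1 := by
    simp only [T, q, sum_product, ← mul_sum, sum_binomialMass, mul_one]
  have hpmfq : ∀ x ∈ T, P ((fun ω => (S ω, D ω)) ⁻¹' {x}) = ENNReal.ofReal (q x) := by
    rintro ⟨ℓ, d⟩ hx
    simp only [T, mem_product, mem_range, Nat.lt_succ_iff] at hx
    have hfiber : (fun ω => (S ω, D ω)) ⁻¹' {(ℓ, d)} = {ω | D ω = d ∧ S ω = ℓ} := by
      ext; simp [and_comm]
    rw [hfiber, hpmf d hx.2 ℓ hx.1]
    congr 1
    simp only [q, p, binomialMass]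
    ring
  have hle := measure_setOf_le_of_pmf (hS.prodMk hD) T q hq hsum hpmfq
    (fun x => δ < |(x.2 : ℝ) / (N * p x.1) - 1|)
  refine le_trans (le_of_eq_of_le ?_ hle) (ENNReal.ofReal_le_ofReal ?_)
  · simp only [gt_iff_lt, hN, p, mul_assoc]
  calc ∑ x ∈ T with δ < |(x.2 : ℝ) / (N * p x.1) - 1|, q x
      = ∑ ℓ ∈ range (L + 1), binomialMass L μ1 ℓ * binomialRelDevTail N (p ℓ) δ := by
        simp only [T, q, binomialRelDevTail, sum_filter, sum_product, mul_sum, mul_ite, mul_zero]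
    _ ≤ _ := by
        rw [← hN]
        exact sum_binomialMass_mul_binomialRelDevTail_le hμ1 hL (by omega) hδ hε hpmin hp0 hp1
          hwin

lemma exp_le_pow_mul_pow_of_abs_sub_le {Γ0 Γ1 μ1 ε : ℝ} (hΓ0 : 0 < Γ0) (hΓ1 : 0 < Γ1)
    {L ℓ : ℕ} (hℓ : ℓ ≤ L) (hdev : |(ℓ : ℝ) - μ1 * L| ≤ ε * L) :
    exp ((μ1 * log Γ1 + (1 - μ1) * log Γ0 - ε * (|log Γ1| + |log Γ0|)) * L)
      ≤ Γ1 ^ ℓ * Γ0 ^ (L - ℓ) := by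
  have hpow : Γ1 ^ ℓ * Γ0 ^ (L - ℓ) = exp (ℓ * log Γ1 + (L - ℓ) * log Γ0) := by
    rw [← rpow_natCast, ← rpow_natCast, rpow_def_of_pos hΓ1, rpow_def_of_pos hΓ0, ← exp_add,
      Nat.cast_sub hℓ]
    ring_nf
  have hεL : 0 ≤ ε * L := (abs_nonneg _).trans hdev
  have hcross : |((ℓ : ℝ) - μ1 * L) * (log Γ1 - log Γ0)| ≤ ε * L * (|log Γ1| + |log Γ0|) := by
    rw [abs_mul]
    exact mul_le_mul hdev (abs_sub _ _) (abs_nonneg _) hεL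
  rw [hpow, exp_le_exp]
  linarith [neg_abs_le (((ℓ : ℝ) - μ1 * L) * (log Γ1 - log Γ0))]

lemma IsAdmissible.tendsto_atTop_s13 {ρ : ℝ} {L : ℕ → ℕ} (hL : IsAdmissible ρ L) (hρ : 0 < ρ) :
    Tendsto (fun n => (L n : ℝ)) atTop atTop := by
  have hlog : Tendsto (fun n : ℕ => ρ * log n) atTop atTop :=
    (tendsto_log_atTop.comp tendsto_natCast_atTop_atTop).const_mul_atTop hρ
  refine (hL.2.pos_mul_atTop one_pos hlog).congr' ?_
  filter_upwards [hlog.eventually_gt_atTop 0] with n hn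
  exact div_mul_cancel₀ _ hn.ne'

lemma IsAdmissible.tendsto_mul_exp_atTop {ρ a : ℝ} {L : ℕ → ℕ} (hL : IsAdmissible ρ L)
    (hρ : 0 < ρ) (ha : 0 < 1 + ρ * a) :
    Tendsto (fun n : ℕ => ((n : ℝ) - 1) * exp (a * L n)) atTop atTop := by
  have hlog : Tendsto (fun n : ℕ => log n) atTop atTop :=
    tendsto_log_atTop.comp tendsto_natCast_atTop_atTop
  -- `log n + a L_n = log n · (1 + ρ a · L_n / (ρ log n))` and the second factor tends to `1 + ρ a`.
  have hexponent : Tendsto (fun n : ℕ => log n + a * L n) atTop atTop := by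
    have hfactor : Tendsto (fun n => 1 + ρ * a * ((L n : ℝ) / (ρ * log n))) atTop
        (𝓝 (1 + ρ * a)) := by
      simpa using (hL.2.const_mul (ρ * a)).const_add 1
    refine (hlog.atTop_mul_pos ha hfactor).congr' ?_
    filter_upwards [hlog.eventually_gt_atTop 0] with n hn
    field_simp
  have hhalf : Tendsto (fun n : ℕ => 2⁻¹ * exp (log n + a * L n)) atTop atTop :=
    (tendsto_exp_atTop.comp hexponent).const_mul_atTop (by norm_num)
  refine tendsto_atTop_mono' atTop ?_ hhalf
  filter_upwards [eventually_ge_atTop 2] with n hn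
  have hn2 : (2 : ℝ) ≤ n := by exact_mod_cast hn
  rw [exp_add, exp_log (by linarith), ← mul_assoc]
  gcongr
  linarith

theorem stmt13_general {Ω : Type*} [MeasurableSpace Ω] (P : Measure Ω) [IsProbabilityMeasure P]
    (μ0 μ1 Γ0 Γ1 : ℝ) (hμ1 : μ1 ∈ Set.Ioo (0:ℝ) 1)
    (hμ : μ0 + μ1 = 1) (hΓ0 : Γ0 ∈ Set.Ioo (0:ℝ) 1) (hΓ1 : Γ1 ∈ Set.Ioo (0:ℝ) 1)
    (ρ : ℝ) (hρ : 0 < ρ)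
    (hcond : 0 < 1 + ρ * Real.log (Γ1 ^ μ1 * Γ0 ^ μ0))
    (L : ℕ → ℕ) (hL : IsAdmissible ρ L)
    (D S : ℕ → Ω → ℕ)
    (hDS : ∀ n, 2 ≤ n → IsCompoundBinomialPair P μ1 μ0 Γ1 Γ0 n (L n) (D n) (S n)) :
    ∀ δ : ℝ, 0 < δ →
      Tendsto (fun (n : ℕ) =>
          P {ω | |(D n ω : ℝ) /
              (((n : ℝ) - 1) * Γ1 ^ (S n ω) * Γ0 ^ (L n - S n ω)) - 1| > δ})
        atTop (nhds 0) := by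
  intro δ hδ
  obtain rfl : μ0 = 1 - μ1 := by linarith
  set g := μ1 * log Γ1 + (1 - μ1) * log Γ0
  set K := |log Γ1| + |log Γ0|
  have hg : log (Γ1 ^ μ1 * Γ0 ^ (1 - μ1)) = g := by
    rw [log_mul (rpow_pos_of_pos hΓ1.1 _).ne' (rpow_pos_of_pos hΓ0.1 _).ne',
      log_rpow hΓ1.1, log_rpow hΓ0.1]
  have hsmall : ∀ᶠ ε in 𝓝[>] 0, 0 < 1 + ρ * (g - ε * K) := by
    refine tendsto_nhdsWithin_of_tendsto_nhds (Continuous.tendsto (by fun_prop) 0) |>.eventually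
      (lt_mem_nhds ?_)
    simpa [hg] using hcond
  obtain ⟨ε, ha, hε⟩ := (hsmall.and self_mem_nhdsWithin).exists
  have hbound := fun n (hn : 2 ≤ n) => (hDS n hn).measure_abs_div_sub_one_gt_le hμ1 hμ hΓ0 hΓ1 hn
    (hL.1 n) hδ hε (exp_pos _) fun ℓ hℓ => exp_le_pow_mul_pow_of_abs_sub_le hΓ0.1 hΓ1.1 hℓ
  have hlim := ((tendsto_const_nhds (x := μ1 * (1 - μ1))).div_atTop
    ((hL.tendsto_atTop_s13 hρ).const_mul_atTop (pow_pos hε 2))).add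
    ((tendsto_const_nhds (x := (1 : ℝ))).div_atTop
      ((hL.tendsto_mul_exp_atTop hρ ha).const_mul_atTop (pow_pos hδ 2)))
  rw [add_zero] at hlim
  refine tendsto_of_tendsto_of_tendsto_of_le_of_le' tendsto_const_nhds
    (ENNReal.ofReal_zero ▸ ENNReal.tendsto_ofReal hlim) (Eventually.of_forall fun _ => zero_le) ?_
  filter_upwards [eventually_ge_atTop 2] with n hn using hbound n hn

/-- `D_n / E[D_n | S_n] → 1` in probability, where
`E[D_n | S_n] = (n-1) Γ1^{S_n} Γ0^{L_n - S_n}`. -/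
theorem stmt13 {Ω : Type*} [MeasurableSpace Ω] (P : Measure Ω) [IsProbabilityMeasure P]
    (μ0 μ1 Γ0 Γ1 : ℝ) (hμ0 : μ0 ∈ Set.Ioo (0:ℝ) 1) (hμ1 : μ1 ∈ Set.Ioo (0:ℝ) 1)
    (hμ : μ0 + μ1 = 1) (hΓ0 : Γ0 ∈ Set.Ioo (0:ℝ) 1) (hΓ1 : Γ1 ∈ Set.Ioo (0:ℝ) 1)
    (ρ : ℝ) (hρ : 0 < ρ)
    (hcond : 0 < 1 + ρ * Real.log (Γ1 ^ μ1 * Γ0 ^ μ0))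
    (L : ℕ → ℕ) (hL : IsAdmissible ρ L)
    (D S : ℕ → Ω → ℕ)
    (hDS : ∀ n, 2 ≤ n → IsCompoundBinomialPair P μ1 μ0 Γ1 Γ0 n (L n) (D n) (S n)) :
    ∀ δ : ℝ, 0 < δ →
      Tendsto (fun (n : ℕ) =>
          P {ω | |(D n ω : ℝ) /
              (((n : ℝ) - 1) * Γ1 ^ (S n ω) * Γ0 ^ (L n - S n ω)) - 1| > δ})
        atTop (nhds 0) :=
  stmt13_general P μ0 μ1 Γ0 Γ1 hμ1 hμ hΓ0 hΓ1 ρ hρ hcond L hL D S hDS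
end
end
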